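/- arXiv:1504.00800 — 4 statements merged into one kernel-verified Lean document; each statement's English description precedes it below -/
import Mathlib

section
/- Let n ≥ 1 and let A be an n×n nonnegative real matrix whose max-times spectral radius λ = λ(A) is positive. A positive vector x ∈ ℝ_{>0}^n satisfies max_{i,j} A_{ij} x_j / x_i = λ (i.e., x attains the minimum of this objective over positive vectors) if and only if there exists a positive vector u ∈ ℝ_{>0}^n such that x = (λ^{-1}A)^* ⊗ u. -/
open scoped BigOperators

noncomputable section

/-- The max-times spectral radius (maximum geometric cycle mean) of a
nonnegative `n × n` real matrix. -/
def mtSpecRad {n : ℕ} (A : Matrix (Fin n) (Fin n) ℝ) : ℝ :=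
  sSup { r : ℝ | ∃ (k : ℕ) (hk : 0 < k), k ≤ n ∧ ∃ f : Fin k → Fin n,
    r = (∏ t : Fin k, A (f t) (f ⟨((t : ℕ) + 1) % k, Nat.mod_lt _ hk⟩)) ^ ((k : ℝ)⁻¹) }

/-- The maximum cycle mean of a real `n × n` matrix (max-plus spectral radius). -/
def mpCycleMean {n : ℕ} (A : Matrix (Fin n) (Fin n) ℝ) : ℝ :=
  sSup { r : ℝ | ∃ (k : ℕ) (hk : 0 < k), k ≤ n ∧ ∃ f : Fin k → Fin n,
    r = (∑ t : Fin k, A (f t) (f ⟨((t : ℕ) + 1) % k, Nat.mod_lt _ hk⟩)) / (k : ℝ) }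

/-- Max-times matrix product. -/
def mtMul {n : ℕ} (A B : Matrix (Fin n) (Fin n) ℝ) : Matrix (Fin n) (Fin n) ℝ :=
  Matrix.of fun i j => ⨆ k : Fin n, A i k * B k j

/-- Max-times matrix powers, with `A^{⊗0} = I`. -/
def mtPow {n : ℕ} (A : Matrix (Fin n) (Fin n) ℝ) : ℕ → Matrix (Fin n) (Fin n) ℝ
  | 0 => Matrix.of fun i j => if i = j then 1 else 0
  | (k + 1) => mtMul (mtPow A k) A

/-- Max-times Kleene star: entrywise maximum of `I, S, S^{⊗2}, …, S^{⊗(n-1)}`. -/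
def mtStar {n : ℕ} (S : Matrix (Fin n) (Fin n) ℝ) : Matrix (Fin n) (Fin n) ℝ :=
  Matrix.of fun i j => ⨆ k : Fin n, mtPow S (k : ℕ) i j

/-- Max-times matrix-vector product. -/
def mtVecMul {n : ℕ} (S : Matrix (Fin n) (Fin n) ℝ) (u : Fin n → ℝ) : Fin n → ℝ :=
  fun i => ⨆ j, S i j * u j

/-- Max-plus matrix product. -/
def mpMul {n : ℕ} (A B : Matrix (Fin n) (Fin n) ℝ) : Matrix (Fin n) (Fin n) ℝ :=
  Matrix.of fun i j => ⨆ k : Fin n, (A i k + B k j)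

/-- `mpPow A k` is the max-plus power `A^{⊗(k+1)}`. -/
def mpPow {n : ℕ} (A : Matrix (Fin n) (Fin n) ℝ) : ℕ → Matrix (Fin n) (Fin n) ℝ
  | 0 => A
  | (k + 1) => mpMul (mpPow A k) A

/-- Max-plus Kleene star: `S^*_{ii} = max(0, max_{1≤k≤n-1} (S^{⊗k})_{ii})` and
`S^*_{ij} = max_{1≤k≤n-1} (S^{⊗k})_{ij}` for `i ≠ j`. -/
def mpStar {n : ℕ} (S : Matrix (Fin n) (Fin n) ℝ) : Matrix (Fin n) (Fin n) ℝ :=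
  Matrix.of fun i j =>
    if i = j then max 0 (⨆ k : Fin (n - 1), mpPow S (k : ℕ) i j)
    else ⨆ k : Fin (n - 1), mpPow S (k : ℕ) i j

/-- Max-plus matrix-vector product. -/
def mpVecMul {n : ℕ} (S : Matrix (Fin n) (Fin n) ℝ) (x : Fin n → ℝ) : Fin n → ℝ :=
  fun i => ⨆ j, (S i j + x j)

/-- Chebyshev-like (max-times) distance between a nonnegative matrix `A` and the
rank-one reciprocal matrix with entries `x i / x j`. -/
def mtRho {n : ℕ} (A : Matrix (Fin n) (Fin n) ℝ) (x : Fin n → ℝ) : ℝ :=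
  max (⨆ p : Fin n × Fin n, A p.1 p.2 * x p.2 / x p.1)
    (sSup { r : ℝ | ∃ i j, 0 < A i j ∧ r = x i / (A i j * x j) })

/-- The alternating max-times product `A ⊗ C^{⊗ i₁} ⊗ A ⊗ C^{⊗ i₂} ⊗ ⋯ ⊗ A ⊗ C^{⊗ i_k}`. -/
def mtChain {n : ℕ} (A C : Matrix (Fin n) (Fin n) ℝ) :
    (k : ℕ) → (Fin k → ℕ) → Matrix (Fin n) (Fin n) ℝ
  | 0, _ => Matrix.of fun i j => if i = j then 1 else 0
  | (k + 1), f => mtMul (mtMul A (mtPow C (f 0))) (mtChain A C k (fun t => f t.succ))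

/-- The optimal value `θ` of the constrained max-times approximation problem. -/
def mtTheta {n : ℕ} (A C : Matrix (Fin n) (Fin n) ℝ) : ℝ :=
  max (mtSpecRad A)
    (sSup { r : ℝ | ∃ k : ℕ, 0 < k ∧ k ≤ n - 1 ∧ ∃ f : Fin k → ℕ,
      1 ≤ ∑ t, f t ∧ (∑ t, f t) ≤ n - k ∧
      r = (⨆ i, mtChain A C k f i i) ^ ((k : ℝ)⁻¹) })


/-!
Write `λ` for `mtSpecRad A` and `B = λ⁻¹ A`. For positive `x`, every cycle product of `A`
telescopes into a product of ratios `A i j * x j / x i`, so `λ` never exceeds the objective,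
and the objective equals `λ` exactly when `x` is a subeigenvector: `B i j * x j ≤ x i`.
A subeigenvector satisfies `B^k ⊗ x ≤ x` for all `k`, hence `B^* ⊗ x = x` since `B^*` has
unit diagonal. Conversely `B ⊗ B^* ≤ B^*`, which makes every `B^* ⊗ u` a subeigenvector:
this only needs `B^{⊗n} ≤ B^*`, and a path of length `n` revisits a vertex, so it splits into
a shorter path and a cycle whose weight is at most `λ(B)^c ≤ 1`.
-/

open Finset

section Paths

variable {α : Type*}

def cutPath (g : ℕ → α) (a c : ℕ) : ℕ → α := fun t => if t ≤ a then g t else g (t + c)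

lemma cutPath_of_le {g : ℕ → α} {a c t : ℕ} (h : t ≤ a) : cutPath g a c t = g t := if_pos h

lemma cutPath_of_ge {g : ℕ → α} {a c t : ℕ} (hg : g a = g (a + c)) (h : a ≤ t) :
    cutPath g a c t = g (t + c) := by
  unfold cutPath
  split_ifs with h'
  · rw [le_antisymm h' h, hg]
  · rfl

lemma prod_range_eq_prod_cutPath_mul {M : Type*} [CommMonoid M] (w : α → α → M)
    {g : ℕ → α} {a c : ℕ} (hg : g a = g (a + c)) (r : ℕ) :
    ∏ t ∈ range (a + c + r), w (g t) (g (t + 1)) =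
      (∏ t ∈ range (a + r), w (cutPath g a c t) (cutPath g a c (t + 1))) *
        ∏ t ∈ range c, w (g (a + t)) (g (a + t + 1)) := by
  have hpre : ∏ t ∈ range a, w (cutPath g a c t) (cutPath g a c (t + 1)) =
      ∏ t ∈ range a, w (g t) (g (t + 1)) :=
    prod_congr rfl fun t ht => by
      have := mem_range.1 ht
      rw [cutPath_of_le (by omega), cutPath_of_le (by omega)]
  have hsuf : ∏ t ∈ range r, w (cutPath g a c (a + t)) (cutPath g a c (a + t + 1)) =
      ∏ t ∈ range r, w (g (a + c + t)) (g (a + c + t + 1)) :=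
    prod_congr rfl fun t _ => by
      rw [cutPath_of_ge hg (by omega), cutPath_of_ge hg (by omega)]
      ac_rfl
  rw [prod_range_add, prod_range_add, prod_range_add, hpre, hsuf, mul_right_comm]

lemma exists_closed_segment {n : ℕ} (g : ℕ → Fin n) :
    ∃ a c r, 0 < c ∧ a + c + r = n ∧ g a = g (a + c) := by
  have segment : ∀ x y : Fin (n + 1), x < y → g x = g y →
      ∃ a c r, 0 < c ∧ a + c + r = n ∧ g a = g (a + c) := fun x y hxy hg => by
    have hxy' : (x : ℕ) < y := hxy
    have hy := y.is_le
    exact ⟨x, y - x, n - y, by omega, by omega, by rwa [Nat.add_sub_cancel' hxy'.le]⟩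
  obtain ⟨x, y, hne, hg⟩ :=
    Fintype.exists_ne_map_eq_of_card_lt (fun t : Fin (n + 1) => g t) (by simp)
  rcases hne.lt_or_gt with h | h
  · exact segment x y h hg
  · exact segment y x h hg.symm

lemma prod_fin_cycle_eq_prod_range {M : Type*} [CommMonoid M] (w : α → α → M) {k : ℕ}
    (g : ℕ → α) (hg : g 0 = g k) :
    ∏ t : Fin k, w (g t) (g ((t + 1) % k)) = ∏ t ∈ range k, w (g t) (g (t + 1)) := by
  rw [← Fin.prod_univ_eq_prod_range]
  refine prod_congr rfl fun t _ => ?_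
  rcases Nat.lt_or_ge (t + 1) k with h | h
  · rw [Nat.mod_eq_of_lt h]
  · rw [show (t : ℕ) + 1 = k by omega, Nat.mod_self, hg]

end Paths

section SpectralRadius

variable {n : ℕ} {A : Matrix (Fin n) (Fin n) ℝ}

lemma mtSpecRad_nonneg (hA : ∀ i j, 0 ≤ A i j) : 0 ≤ mtSpecRad A :=
  Real.sSup_nonneg (by
    rintro _ ⟨k, -, -, f, rfl⟩
    exact Real.rpow_nonneg (prod_nonneg fun _ _ => hA _ _) _)

lemma closedPath_prod_le_pow_of_mul_le (hA : ∀ i j, 0 ≤ A i j) {x : Fin n → ℝ}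
    (hx : ∀ i, 0 < x i) {c : ℝ} (hAx : ∀ i j, A i j * x j ≤ c * x i) (k : ℕ)
    (g : ℕ → Fin n) (hg : g 0 = g k) : ∏ t ∈ range k, A (g t) (g (t + 1)) ≤ c ^ k := by
  have hshift : ∏ t ∈ range k, x (g (t + 1)) = ∏ t ∈ range k, x (g t) := by
    refine mul_right_cancel₀ (hx (g 0)).ne' ?_
    rw [← prod_range_succ' (fun t => x (g t)), prod_range_succ, hg]
  refine le_of_mul_le_mul_right ?_ (prod_pos fun t (_ : t ∈ range k) => hx (g t))
  calc (∏ t ∈ range k, A (g t) (g (t + 1))) * ∏ t ∈ range k, x (g t)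
      = ∏ t ∈ range k, A (g t) (g (t + 1)) * x (g (t + 1)) := by
        rw [← hshift, prod_mul_distrib]
    _ ≤ ∏ t ∈ range k, c * x (g t) :=
        prod_le_prod (fun _ _ => mul_nonneg (hA _ _) (hx _).le) fun _ _ => hAx _ _
    _ = c ^ k * ∏ t ∈ range k, x (g t) := by rw [prod_mul_distrib, prod_const, card_range]

lemma cycleMean_le_of_closedPath_le (hA : ∀ i j, 0 ≤ A i j) {c : ℝ} (hc : 0 ≤ c) {k : ℕ}
    (hk : 0 < k) (f : Fin k → Fin n)
    (hcyc : ∀ g : ℕ → Fin n, g 0 = g k → ∏ t ∈ range k, A (g t) (g (t + 1)) ≤ c ^ k) :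
    (∏ t : Fin k, A (f t) (f ⟨((t : ℕ) + 1) % k, Nat.mod_lt _ hk⟩)) ^ ((k : ℝ)⁻¹)
      ≤ c := by
  set g : ℕ → Fin n := fun t => f ⟨t % k, Nat.mod_lt _ hk⟩
  have hfg : ∏ t : Fin k, A (f t) (f ⟨((t : ℕ) + 1) % k, Nat.mod_lt _ hk⟩) =
      ∏ t ∈ range k, A (g t) (g (t + 1)) := by
    rw [← Fin.prod_univ_eq_prod_range]
    refine prod_congr rfl fun t _ => ?_
    rw [show g t = f t from congrArg f (Fin.ext (Nat.mod_eq_of_lt t.2))]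
  have hP : 0 ≤ ∏ t ∈ range k, A (g t) (g (t + 1)) := prod_nonneg fun _ _ => hA _ _
  rw [hfg, Real.rpow_inv_le_iff_of_pos hP hc (by exact_mod_cast hk), Real.rpow_natCast]
  exact hcyc g (by simp [g])

lemma mtSpecRad_le_of_closedPath_le (hA : ∀ i j, 0 ≤ A i j) {c : ℝ} (hc : 0 ≤ c)
    (hcyc : ∀ k, 0 < k → k ≤ n → ∀ g : ℕ → Fin n, g 0 = g k →
      ∏ t ∈ range k, A (g t) (g (t + 1)) ≤ c ^ k) :
    mtSpecRad A ≤ c :=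
  Real.sSup_le (by
    rintro _ ⟨k, hk, hkn, f, rfl⟩
    exact cycleMean_le_of_closedPath_le hA hc hk f (hcyc k hk hkn)) hc

lemma closedPath_prod_le_mtSpecRad_pow (hA : ∀ i j, 0 ≤ A i j) {k : ℕ} (hk : 0 < k)
    (hkn : k ≤ n) (g : ℕ → Fin n) (hg : g 0 = g k) :
    ∏ t ∈ range k, A (g t) (g (t + 1)) ≤ mtSpecRad A ^ k := by
  have hP : 0 ≤ ∏ t ∈ range k, A (g t) (g (t + 1)) := prod_nonneg fun _ _ => hA _ _
  -- Taking `x = 1` bounds all cycle means by the largest entry, so `le_csSup` applies.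
  have hmax : 0 ≤ ⨆ p : Fin n × Fin n, A p.1 p.2 := Real.iSup_nonneg fun p => hA p.1 p.2
  have hentry (i j : Fin n) : A i j * 1 ≤ (⨆ p : Fin n × Fin n, A p.1 p.2) * 1 := by
    simpa using le_ciSup (Finite.bddAbove_range fun p : Fin n × Fin n => A p.1 p.2) (i, j)
  rw [← Real.rpow_natCast,
    ← Real.rpow_inv_le_iff_of_pos hP (mtSpecRad_nonneg hA) (by exact_mod_cast hk),
    ← prod_fin_cycle_eq_prod_range A g hg]
  refine le_csSup ⟨⨆ p : Fin n × Fin n, A p.1 p.2, ?_⟩ ⟨k, hk, hkn, fun t => g t, rfl⟩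
  rintro _ ⟨k', hk', -, f, rfl⟩
  exact cycleMean_le_of_closedPath_le hA hmax hk' f
    (closedPath_prod_le_pow_of_mul_le hA (x := fun _ => 1) (fun _ => one_pos) hentry k')

lemma mtSpecRad_smul_le (hA : ∀ i j, 0 ≤ A i j) {c : ℝ} (hc : 0 ≤ c) :
    mtSpecRad (c • A) ≤ c * mtSpecRad A := by
  refine mtSpecRad_le_of_closedPath_le (fun i j => mul_nonneg hc (hA i j))
    (mul_nonneg hc (mtSpecRad_nonneg hA)) fun k hk hkn g hg => ?_
  calc ∏ t ∈ range k, (c • A) (g t) (g (t + 1))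
      = c ^ k * ∏ t ∈ range k, A (g t) (g (t + 1)) := by
        simp only [Matrix.smul_apply, smul_eq_mul]
        rw [prod_mul_distrib, prod_const, card_range]
    _ ≤ c ^ k * mtSpecRad A ^ k :=
        mul_le_mul_of_nonneg_left (closedPath_prod_le_mtSpecRad_pow hA hk hkn g hg)
          (pow_nonneg hc k)
    _ = (c * mtSpecRad A) ^ k := (mul_pow _ _ _).symm

lemma iSup_ratio_le_iff {x : Fin n → ℝ} (hx : ∀ i, 0 < x i) {c : ℝ} (hc : 0 ≤ c) :
    (⨆ p : Fin n × Fin n, A p.1 p.2 * x p.2 / x p.1) ≤ c ↔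
      ∀ i j, A i j * x j ≤ c * x i := by
  refine ⟨fun h i j => ?_, fun h => Real.iSup_le (fun p => ?_) hc⟩
  · rw [← div_le_iff₀ (hx i)]
    exact (le_ciSup (Finite.bddAbove_range fun p : Fin n × Fin n => A p.1 p.2 * x p.2 / x p.1)
      (i, j)).trans h
  · exact (div_le_iff₀ (hx p.1)).2 (h p.1 p.2)

lemma mtSpecRad_le_iSup_ratio (hA : ∀ i j, 0 ≤ A i j) {x : Fin n → ℝ}
    (hx : ∀ i, 0 < x i) :
    mtSpecRad A ≤ ⨆ p : Fin n × Fin n, A p.1 p.2 * x p.2 / x p.1 := by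
  have hM : 0 ≤ ⨆ p : Fin n × Fin n, A p.1 p.2 * x p.2 / x p.1 :=
    Real.iSup_nonneg fun p => div_nonneg (mul_nonneg (hA _ _) (hx _).le) (hx _).le
  exact mtSpecRad_le_of_closedPath_le hA hM fun k _ _ =>
    closedPath_prod_le_pow_of_mul_le hA hx ((iSup_ratio_le_iff hx hM).1 le_rfl) k

end SpectralRadius

section KleeneStar

variable {n : ℕ} {B : Matrix (Fin n) (Fin n) ℝ}

lemma mtPow_succ_apply (B : Matrix (Fin n) (Fin n) ℝ) (k : ℕ) (i j : Fin n) :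
    mtPow B (k + 1) i j = ⨆ l, mtPow B k i l * B l j := rfl

lemma mtPow_nonneg (hB : ∀ i j, 0 ≤ B i j) (k : ℕ) (i j : Fin n) : 0 ≤ mtPow B k i j := by
  induction k generalizing j with
  | zero =>
    simp only [mtPow, Matrix.of_apply]
    split_ifs <;> norm_num
  | succ k ih =>
    have : Nonempty (Fin n) := ⟨i⟩
    exact (mul_nonneg (ih i) (hB i j)).trans
      (le_ciSup (Finite.bddAbove_range fun l => mtPow B k i l * B l j) i)

lemma mtPow_one_apply (hB : ∀ i j, 0 ≤ B i j) (i j : Fin n) : mtPow B 1 i j = B i j := by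
  have : Nonempty (Fin n) := ⟨i⟩
  rw [mtPow_succ_apply]
  refine le_antisymm (ciSup_le fun l => ?_) ?_
  · simp only [mtPow, Matrix.of_apply]
    split_ifs with h
    · rw [h, one_mul]
    · rw [zero_mul]
      exact hB i j
  · calc B i j = mtPow B 0 i i * B i j := by simp [mtPow]
      _ ≤ _ := le_ciSup (Finite.bddAbove_range fun l => mtPow B 0 i l * B l j) i

lemma mtPow_le_mtStar {k : ℕ} (hk : k < n) (i j : Fin n) : mtPow B k i j ≤ mtStar B i j :=
  le_ciSup (Finite.bddAbove_range fun m : Fin n => mtPow B m i j) ⟨k, hk⟩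

lemma one_le_mtStar_self (i : Fin n) : 1 ≤ mtStar B i i := by
  simpa [mtPow] using mtPow_le_mtStar (B := B) (Fin.pos i) i i

lemma mtPow_mul_le_of_mul_le (hB : ∀ i j, 0 ≤ B i j) {x : Fin n → ℝ} (hx : ∀ i, 0 ≤ x i)
    (hBx : ∀ i j, B i j * x j ≤ x i) (k : ℕ) (i j : Fin n) : mtPow B k i j * x j ≤ x i := by
  induction k generalizing j with
  | zero =>
    simp only [mtPow, Matrix.of_apply]
    split_ifs with h
    · rw [h, one_mul]
    · rw [zero_mul]
      exact hx i
  | succ k ih =>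
    have : Nonempty (Fin n) := ⟨i⟩
    rw [mtPow_succ_apply, Real.iSup_mul_of_nonneg (hx j)]
    refine ciSup_le fun l => ?_
    calc mtPow B k i l * B l j * x j = mtPow B k i l * (B l j * x j) := mul_assoc _ _ _
      _ ≤ mtPow B k i l * x l := mul_le_mul_of_nonneg_left (hBx l j) (mtPow_nonneg hB k i l)
      _ ≤ x i := ih l

lemma mtVecMul_mtStar_eq_self_of_mul_le (hB : ∀ i j, 0 ≤ B i j) {x : Fin n → ℝ}
    (hx : ∀ i, 0 ≤ x i) (hBx : ∀ i j, B i j * x j ≤ x i) : mtVecMul (mtStar B) x = x := by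
  funext i
  have : Nonempty (Fin n) := ⟨i⟩
  refine le_antisymm (ciSup_le fun j => ?_) ?_
  · change (⨆ k : Fin n, mtPow B k i j) * x j ≤ x i
    rw [Real.iSup_mul_of_nonneg (hx j)]
    exact ciSup_le fun k => mtPow_mul_le_of_mul_le hB hx hBx k i j
  · calc x i ≤ mtStar B i i * x i := le_mul_of_one_le_left (hx i) (one_le_mtStar_self i)
      _ ≤ mtVecMul (mtStar B) x i :=
        le_ciSup (Finite.bddAbove_range fun j => mtStar B i j * x j) i

lemma mul_mtPow_le (hB : ∀ i j, 0 ≤ B i j) (k : ℕ) (i j l : Fin n) :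
    B i j * mtPow B k j l ≤ mtPow B (k + 1) i l := by
  induction k generalizing l with
  | zero =>
    rw [mtPow_one_apply hB]
    simp only [mtPow, Matrix.of_apply]
    split_ifs with h
    · rw [h, mul_one]
    · rw [mul_zero]
      exact hB i l
  | succ k ih =>
    have : Nonempty (Fin n) := ⟨i⟩
    rw [mtPow_succ_apply B k j l, Real.mul_iSup_of_nonneg (hB i j)]
    refine ciSup_le fun m => ?_
    calc B i j * (mtPow B k j m * B m l) = B i j * mtPow B k j m * B m l := (mul_assoc _ _ _).symm
      _ ≤ mtPow B (k + 1) i m * B m l := mul_le_mul_of_nonneg_right (ih m) (hB m l)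
      _ ≤ mtPow B (k + 1 + 1) i l :=
        le_ciSup (Finite.bddAbove_range fun m => mtPow B (k + 1) i m * B m l) m

lemma prod_path_le_mtPow (hB : ∀ i j, 0 ≤ B i j) (g : ℕ → Fin n) (m : ℕ) :
    ∏ t ∈ range m, B (g t) (g (t + 1)) ≤ mtPow B m (g 0) (g m) := by
  induction m with
  | zero => simp [mtPow]
  | succ m ih =>
    have : Nonempty (Fin n) := ⟨g 0⟩
    rw [prod_range_succ]
    calc _ ≤ mtPow B m (g 0) (g m) * B (g m) (g (m + 1)) :=
          mul_le_mul_of_nonneg_right ih (hB _ _)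
      _ ≤ mtPow B (m + 1) (g 0) (g (m + 1)) :=
        le_ciSup (Finite.bddAbove_range fun l => mtPow B m (g 0) l * B l (g (m + 1))) (g m)

lemma exists_path_mtPow_le (hB : ∀ i j, 0 ≤ B i j) {m : ℕ} (hm : 0 < m) (i j : Fin n) :
    ∃ g : ℕ → Fin n, g 0 = i ∧ g m = j ∧
      mtPow B m i j ≤ ∏ t ∈ range m, B (g t) (g (t + 1)) := by
  induction m, hm using Nat.le_induction generalizing j with
  | base => exact ⟨fun t => if t = 0 then i else j, rfl, rfl, by simp [mtPow_one_apply hB]⟩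
  | succ m hm ih =>
    have : Nonempty (Fin n) := ⟨i⟩
    obtain ⟨l, hl⟩ := Finite.exists_max fun l => mtPow B m i l * B l j
    obtain ⟨g, hg0, hgm, hle⟩ := ih l
    set g' : ℕ → Fin n := fun t => if t ≤ m then g t else j
    have hprefix : ∀ t ∈ range m, B (g' t) (g' (t + 1)) = B (g t) (g (t + 1)) := fun t ht => by
      have := mem_range.1 ht
      simp only [g', if_pos (by omega : t ≤ m), if_pos (by omega : t + 1 ≤ m)]
    refine ⟨g', by simp [g', hg0], by simp [g'], ?_⟩
    calc mtPow B (m + 1) i j ≤ mtPow B m i l * B l j := ciSup_le hl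
      _ ≤ (∏ t ∈ range m, B (g t) (g (t + 1))) * B l j :=
        mul_le_mul_of_nonneg_right hle (hB l j)
      _ = ∏ t ∈ range (m + 1), B (g' t) (g' (t + 1)) := by
        rw [prod_range_succ, prod_congr rfl hprefix]
        simp [g', hgm]

lemma mtPow_self_le_mtStar (hB : ∀ i j, 0 ≤ B i j) (hρ : mtSpecRad B ≤ 1) (i j : Fin n) :
    mtPow B n i j ≤ mtStar B i j := by
  obtain ⟨g, rfl, rfl, hle⟩ := exists_path_mtPow_le hB (Fin.pos i) i j
  obtain ⟨a, c, r, hc, hn, hg⟩ := exists_closed_segment g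
  have hcycle : ∏ t ∈ range c, B (g (a + t)) (g (a + t + 1)) ≤ 1 :=
    (closedPath_prod_le_mtSpecRad_pow hB hc (by omega) (fun t => g (a + t)) hg).trans
      (pow_le_one₀ (mtSpecRad_nonneg hB) hρ)
  calc mtPow B n (g 0) (g n) ≤ ∏ t ∈ range n, B (g t) (g (t + 1)) := hle
    _ = (∏ t ∈ range (a + r), B (cutPath g a c t) (cutPath g a c (t + 1))) *
          ∏ t ∈ range c, B (g (a + t)) (g (a + t + 1)) := by
        rw [← prod_range_eq_prod_cutPath_mul B hg r, hn]
    _ ≤ ∏ t ∈ range (a + r), B (cutPath g a c t) (cutPath g a c (t + 1)) :=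
        mul_le_of_le_one_right (prod_nonneg fun _ _ => hB _ _) hcycle
    _ ≤ mtPow B (a + r) (cutPath g a c 0) (cutPath g a c (a + r)) := prod_path_le_mtPow hB _ _
    _ = mtPow B (a + r) (g 0) (g n) := by
        rw [cutPath_of_le (Nat.zero_le a), cutPath_of_ge hg (by omega), show a + r + c = n by omega]
    _ ≤ mtStar B (g 0) (g n) := mtPow_le_mtStar (by omega) _ _

lemma mul_mtStar_le (hB : ∀ i j, 0 ≤ B i j) (hρ : mtSpecRad B ≤ 1) (i j l : Fin n) :
    B i j * mtStar B j l ≤ mtStar B i l := by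
  have : Nonempty (Fin n) := ⟨i⟩
  change B i j * ⨆ k : Fin n, mtPow B k j l ≤ _
  rw [Real.mul_iSup_of_nonneg (hB i j)]
  refine ciSup_le fun k => (mul_mtPow_le hB k i j l).trans ?_
  rcases Nat.lt_or_ge (k + 1) n with h | h
  · exact mtPow_le_mtStar h i l
  · rw [show (k : ℕ) + 1 = n by omega]
    exact mtPow_self_le_mtStar hB hρ i l

lemma mul_mtVecMul_mtStar_le (hB : ∀ i j, 0 ≤ B i j) (hρ : mtSpecRad B ≤ 1)
    {u : Fin n → ℝ} (hu : ∀ j, 0 ≤ u j) (i j : Fin n) :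
    B i j * mtVecMul (mtStar B) u j ≤ mtVecMul (mtStar B) u i := by
  have : Nonempty (Fin n) := ⟨i⟩
  change B i j * ⨆ l, mtStar B j l * u l ≤ ⨆ l, mtStar B i l * u l
  rw [Real.mul_iSup_of_nonneg (hB i j)]
  refine ciSup_le fun l => ?_
  calc B i j * (mtStar B j l * u l) = B i j * mtStar B j l * u l := (mul_assoc _ _ _).symm
    _ ≤ mtStar B i l * u l := mul_le_mul_of_nonneg_right (mul_mtStar_le hB hρ i j l) (hu l)
    _ ≤ ⨆ l, mtStar B i l * u l :=
      le_ciSup (Finite.bddAbove_range fun l => mtStar B i l * u l) l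

end KleeneStar

theorem mt_unconstrained_minimizers_general {n : ℕ} (A : Matrix (Fin n) (Fin n) ℝ)
    (hA : ∀ i j, 0 ≤ A i j) (lam : ℝ) (hlam : lam = mtSpecRad A) (hpos : 0 < lam)
    (x : Fin n → ℝ) (hx : ∀ i, 0 < x i) :
    (⨆ p : Fin n × Fin n, A p.1 p.2 * x p.2 / x p.1) = lam ↔
      ∃ u : Fin n → ℝ, (∀ i, 0 < u i) ∧ x = mtVecMul (mtStar (lam⁻¹ • A)) u := by
  subst hlam
  set B := (mtSpecRad A)⁻¹ • A with hB_def
  have hB : ∀ i j, 0 ≤ B i j := fun i j => mul_nonneg (inv_nonneg.2 hpos.le) (hA i j)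
  have hρ : mtSpecRad B ≤ 1 :=
    (mtSpecRad_smul_le hA (inv_nonneg.2 hpos.le)).trans_eq (inv_mul_cancel₀ hpos.ne')
  have hsub : (⨆ p : Fin n × Fin n, A p.1 p.2 * x p.2 / x p.1) = mtSpecRad A ↔
      ∀ i j, B i j * x j ≤ x i := by
    rw [le_antisymm_iff, and_iff_left (mtSpecRad_le_iSup_ratio hA hx),
      iSup_ratio_le_iff hx hpos.le]
    simp only [hB_def, Matrix.smul_apply, smul_eq_mul, mul_assoc, inv_mul_le_iff₀ hpos]
  rw [hsub]
  constructor
  · intro hsubeigen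
    exact ⟨x, hx, (mtVecMul_mtStar_eq_self_of_mul_le hB (fun i => (hx i).le) hsubeigen).symm⟩
  · rintro ⟨u, hu, rfl⟩
    exact mul_mtVecMul_mtStar_le hB hρ fun j => (hu j).le

/-- A positive vector `x` attains the minimum value `λ(A)` of the
objective `max_{i,j} A_{ij} x_j / x_i` iff `x = (λ⁻¹ A)^* ⊗ u` for some positive `u`. -/
theorem mt_unconstrained_minimizers {n : ℕ} (hn : 1 ≤ n) (A : Matrix (Fin n) (Fin n) ℝ)
    (hA : ∀ i j, 0 ≤ A i j) (lam : ℝ) (hlam : lam = mtSpecRad A) (hpos : 0 < lam)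
    (x : Fin n → ℝ) (hx : ∀ i, 0 < x i) :
    (⨆ p : Fin n × Fin n, A p.1 p.2 * x p.2 / x p.1) = lam ↔
      ∃ u : Fin n → ℝ, (∀ i, 0 < u i) ∧ x = mtVecMul (mtStar (lam⁻¹ • A)) u :=
  mt_unconstrained_minimizers_general A hA lam hlam hpos x hx
end
end

section
/- Let n ≥ 1 and let A be an n×n real matrix. Then the minimum over all vectors x ∈ ℝ^n of max_{i,j} (A_{ij} + x_j − x_i) equals the maximum cycle mean λ(A) = max_{1≤k≤n} max_{i_1,…,i_k} (A_{i_1 i_2} + A_{i_2 i_3} + ⋯ + A_{i_k i_1})/k, and the minimum is attained. -/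
open scoped BigOperators

noncomputable section

/-!
For every potential `x`, a cycle mean of `A` is the average of the slacks
`A i j + x j - x i` along the cycle (the potentials telescope), so `λ(A) ≤ ρ(x)`, where `ρ(x)` is
the largest slack. Conversely, `ρ` is continuous, invariant under adding a constant to `x` and
coercive once one coordinate is fixed, so it attains its minimum at some `x₀`. If the edges on
which `x₀` is tight contained no cycle, shifting `x₀` by a small multiple of a height function
that increases along tight edges would lower every slack below `ρ(x₀)`; hence there is a tight
cycle. Following a chosen tight successor from a vertex on it eventually becomes periodic, which
gives a tight cycle of length at most `n`; its mean is `ρ(x₀)`.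
-/

open Filter Topology Function Relation Finset

section Cycles

variable {α : Type*}

lemma val_finRotate {k : ℕ} (t : Fin k) : (finRotate k t : ℕ) = ((t : ℕ) + 1) % k := by
  have := t.neZero
  rw [finRotate_apply, Fin.val_add, Fin.val_one', Nat.add_mod_mod]

lemma Fin.mk_add_one_mod_eq_finRotate {k : ℕ} (t : Fin k) (h : ((t : ℕ) + 1) % k < k) :
    (⟨((t : ℕ) + 1) % k, h⟩ : Fin k) = finRotate k t :=
  Fin.ext (val_finRotate t).symm

lemma Function.exists_iterate_mem_periodicPts [Finite α] (σ : α → α) (x : α) :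
    ∃ m, σ^[m] x ∈ periodicPts σ := by
  obtain ⟨a, b, heq, hne⟩ : ∃ a b, σ^[a] x = σ^[b] x ∧ a ≠ b := by
    simpa [Injective] using not_injective_infinite_finite (σ^[·] x)
  wlog hlt : a < b generalizing a b
  · exact this b a heq.symm hne.symm (by omega)
  refine ⟨a, mk_mem_periodicPts (n := b - a) (by omega) ?_⟩
  rw [IsPeriodicPt, IsFixedPt, ← iterate_add_apply, Nat.sub_add_cancel hlt.le, heq]

lemma Function.exists_cycle [Fintype α] [Nonempty α] (σ : α → α) :
    ∃ k, 0 < k ∧ k ≤ Fintype.card α ∧ ∃ g : Fin k → α, ∀ t, g (finRotate k t) = σ (g t) := by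
  obtain ⟨m, hm⟩ := exists_iterate_mem_periodicPts σ (Classical.arbitrary α)
  generalize σ^[m] (Classical.arbitrary α) = y at hm
  refine ⟨minimalPeriod σ y, minimalPeriod_pos_of_mem_periodicPts hm, minimalPeriod_le_card,
    fun t => σ^[t] y, fun t => ?_⟩
  dsimp only
  rw [val_finRotate, iterate_mod_minimalPeriod_eq, iterate_succ_apply']

lemma Relation.TransGen.exists_cycle [Fintype α] {r : α → α → Prop} {i : α}
    (h : TransGen r i i) :
    ∃ k, 0 < k ∧ k ≤ Fintype.card α ∧ ∃ g : Fin k → α, ∀ t, r (g t) (g (finRotate k t)) := by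
  classical
  have hsucc : ∀ j : {j // TransGen r j j}, ∃ l : {j // TransGen r j j}, r j l := by
    rintro ⟨j, hj⟩
    obtain ⟨l, hjl, hlj⟩ := TransGen.head'_iff.mp hj
    exact ⟨⟨l, TransGen.tail' hlj hjl⟩, hjl⟩
  choose σ hσ using hsucc
  have : Nonempty {j // TransGen r j j} := ⟨⟨i, h⟩⟩
  obtain ⟨k, hk, hkcard, g, hg⟩ := Function.exists_cycle σ
  refine ⟨k, hk, hkcard.trans (Fintype.card_subtype_le _), fun t => g t, fun t => ?_⟩
  dsimp only
  rw [hg]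
  exact hσ _

lemma Relation.ncard_transGen_lt_of_rel [Finite α] {r : α → α → Prop}
    (hr : ∀ i, ¬ TransGen r i i) {i j : α} (hij : r i j) :
    {l | TransGen r l i}.ncard < {l | TransGen r l j}.ncard := by
  refine Set.ncard_lt_ncard ⟨fun l hl => TransGen.tail hl hij, fun hsub => hr i ?_⟩
    (Set.toFinite _)
  exact hsub (TransGen.single hij)

end Cycles

section MaxPlus

variable {ι : Type*} (A : Matrix ι ι ℝ)

def mpRho (x : ι → ℝ) : ℝ :=
  ⨆ p : ι × ι, A p.1 p.2 + x p.2 - x p.1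

lemma le_mpRho [Finite ι] (x : ι → ℝ) (i j : ι) : A i j + x j - x i ≤ mpRho A x :=
  le_ciSup (f := fun p : ι × ι => A p.1 p.2 + x p.2 - x p.1) (Set.finite_range _).bddAbove (i, j)

lemma exists_eq_mpRho [Finite ι] [Nonempty ι] (x : ι → ℝ) :
    ∃ i j, A i j + x j - x i = mpRho A x :=
  let ⟨p, hp⟩ := exists_eq_ciSup_of_finite (f := fun p : ι × ι => A p.1 p.2 + x p.2 - x p.1)
  ⟨p.1, p.2, hp⟩

lemma mpRho_add_const (x : ι → ℝ) (c : ℝ) : mpRho A (fun i => x i + c) = mpRho A x :=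
  iSup_congr fun _ => by ring

lemma continuous_mpRho [Fintype ι] [Nonempty ι] : Continuous (mpRho A) := by
  have : mpRho A = fun x => univ.sup' univ_nonempty fun p : ι × ι => A p.1 p.2 + x p.2 - x p.1 :=
    funext fun x => (sup'_univ_eq_ciSup _).symm
  rw [this]
  exact Continuous.finset_sup'_apply _ fun p _ => by fun_prop

lemma norm_le_mpRho_add [Fintype ι] [Nonempty ι] {x : ι → ℝ} {i₀ : ι} (hx : x i₀ = 0) :
    ‖x‖ ≤ mpRho A x + ⨆ p : ι × ι, -A p.1 p.2 := by
  have hA (i j : ι) : -A i j ≤ ⨆ p : ι × ι, -A p.1 p.2 :=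
    le_ciSup (f := fun p : ι × ι => -A p.1 p.2) (Set.finite_range _).bddAbove (i, j)
  have hxi (i : ι) : |x i| ≤ mpRho A x + ⨆ p : ι × ι, -A p.1 p.2 := by
    rw [abs_le]
    constructor <;> linarith [le_mpRho A x i₀ i, le_mpRho A x i i₀, hA i₀ i, hA i i₀]
  exact (pi_norm_le_iff_of_nonneg ((abs_nonneg _).trans (hxi i₀))).mpr hxi

lemma exists_forall_mpRho_le [Fintype ι] [Nonempty ι] : ∃ x₀, ∀ x, mpRho A x₀ ≤ mpRho A x := by
  let i₀ := Classical.arbitrary ι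
  let s := {x : ι → ℝ | x i₀ = 0}
  have hcoercive : ∀ᶠ x in cocompact (ι → ℝ) ⊓ 𝓟 s, mpRho A 0 ≤ mpRho A x := by
    filter_upwards [(tendsto_norm_cocompact_atTop.eventually_ge_atTop
        (mpRho A 0 + ⨆ p : ι × ι, -A p.1 p.2)).filter_mono inf_le_left,
      mem_inf_of_right (mem_principal_self s)] with x hnorm hx
    linarith [norm_le_mpRho_add A hx]
  obtain ⟨x₀, -, hmin⟩ := (continuous_mpRho A).continuousOn.exists_isMinOn'
    (isClosed_eq (continuous_apply i₀) continuous_const) rfl hcoercive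
  refine ⟨x₀, fun x => ?_⟩
  rw [← mpRho_add_const A x (-x i₀)]
  exact hmin (show x i₀ + -x i₀ = 0 by ring)

lemma exists_transGen_tight [Finite ι] [Nonempty ι] {x₀ : ι → ℝ}
    (hx₀ : ∀ x, mpRho A x₀ ≤ mpRho A x) :
    ∃ i, TransGen (fun i j => A i j + x₀ j - x₀ i = mpRho A x₀) i i := by
  by_contra! hacyc
  set tight := fun i j => A i j + x₀ j - x₀ i = mpRho A x₀
  let height : ι → ℕ := fun i => {l | TransGen tight l i}.ncard
  have height_lt {i j : ι} (hij : tight i j) : (height i : ℝ) + 1 ≤ height j := by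
    exact_mod_cast Nat.succ_le_of_lt (ncard_transGen_lt_of_rel hacyc hij)
  have hev : ∀ᶠ ε in 𝓝[>] (0 : ℝ),
      ∀ i j, A i j + (x₀ j - ε * height j) - (x₀ i - ε * height i) < mpRho A x₀ := by
    rw [eventually_all]
    intro i
    rw [eventually_all]
    intro j
    by_cases hij : tight i j
    · filter_upwards [self_mem_nhdsWithin] with ε (hε : 0 < ε)
      nlinarith [height_lt hij, show A i j + x₀ j - x₀ i = mpRho A x₀ from hij]
    · have hlim : Tendsto (fun ε : ℝ => A i j + (x₀ j - ε * height j) - (x₀ i - ε * height i))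
          (𝓝[>] 0) (𝓝 (A i j + x₀ j - x₀ i)) :=
        ((Continuous.tendsto' (by fun_prop) 0 _ (by simp))).mono_left nhdsWithin_le_nhds
      exact hlim.eventually_lt_const ((le_mpRho A x₀ i j).lt_of_ne hij)
  obtain ⟨ε, hε⟩ := hev.exists
  obtain ⟨i, j, hij⟩ := exists_eq_mpRho A fun i => x₀ i - ε * height i
  exact (hε i j).not_ge (hij ▸ hx₀ _)

lemma sum_cycle_slack {k : ℕ} (g : Fin k → ι) (x : ι → ℝ) :
    ∑ t, (A (g t) (g (finRotate k t)) + x (g (finRotate k t)) - x (g t)) =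
      ∑ t, A (g t) (g (finRotate k t)) := by
  rw [sum_sub_distrib, sum_add_distrib, Equiv.sum_comp (finRotate k) fun t => x (g t),
    add_sub_cancel_right]

lemma cycleMean_le_mpRho [Finite ι] {k : ℕ} (hk : 0 < k) (g : Fin k → ι) (x : ι → ℝ) :
    (∑ t, A (g t) (g (finRotate k t))) / k ≤ mpRho A x := by
  rw [div_le_iff₀ (by positivity), ← sum_cycle_slack A g x]
  calc _ ≤ ∑ _t : Fin k, mpRho A x := sum_le_sum fun t _ => le_mpRho A x _ _
    _ = mpRho A x * k := by simp [mul_comm]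

lemma cycleMean_eq_of_forall_slack_eq {k : ℕ} (hk : 0 < k) (g : Fin k → ι) (x : ι → ℝ) (c : ℝ)
    (h : ∀ t, A (g t) (g (finRotate k t)) + x (g (finRotate k t)) - x (g t) = c) :
    (∑ t, A (g t) (g (finRotate k t))) / k = c := by
  rw [← sum_cycle_slack A g x, sum_congr rfl fun t _ => h t, sum_const, card_univ,
    Fintype.card_fin, nsmul_eq_mul]
  field_simp

end MaxPlus

section CycleMean

variable {n : ℕ} (A : Matrix (Fin n) (Fin n) ℝ)

def mpCycleMeans : Set ℝ :=
  { r : ℝ | ∃ (k : ℕ) (hk : 0 < k), k ≤ n ∧ ∃ f : Fin k → Fin n,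
    r = (∑ t : Fin k, A (f t) (f ⟨((t : ℕ) + 1) % k, Nat.mod_lt _ hk⟩)) / (k : ℝ) }

lemma mpRho_mem_upperBounds_mpCycleMeans (x : Fin n → ℝ) :
    mpRho A x ∈ upperBounds (mpCycleMeans A) := by
  rintro _ ⟨k, hk, -, g, rfl⟩
  simpa only [Fin.mk_add_one_mod_eq_finRotate] using cycleMean_le_mpRho A hk g x

lemma mpCycleMean_le_mpRho (hn : 1 ≤ n) (x : Fin n → ℝ) : mpCycleMean A ≤ mpRho A x :=
  csSup_le ⟨_, 1, one_pos, hn, fun _ => ⟨0, hn⟩, rfl⟩ (mpRho_mem_upperBounds_mpCycleMeans A x)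

lemma cycleMean_le_mpCycleMean {k : ℕ} (hk : 0 < k) (hkn : k ≤ n) (g : Fin k → Fin n) :
    (∑ t, A (g t) (g (finRotate k t))) / k ≤ mpCycleMean A :=
  le_csSup ⟨_, mpRho_mem_upperBounds_mpCycleMeans A 0⟩
    ⟨k, hk, hkn, g, by simp only [Fin.mk_add_one_mod_eq_finRotate]⟩

end CycleMean

/-- The minimum over `x ∈ ℝⁿ` of `max_{i,j} (A_{ij} + x_j − x_i)`
equals the maximum cycle mean `λ(A)`, and it is attained. -/
theorem mp_unconstrained_min {n : ℕ} (hn : 1 ≤ n) (A : Matrix (Fin n) (Fin n) ℝ) :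
    IsLeast { y : ℝ | ∃ x : Fin n → ℝ,
        y = ⨆ p : Fin n × Fin n, A p.1 p.2 + x p.2 - x p.1 }
      (mpCycleMean A) := by
  have : Nonempty (Fin n) := ⟨⟨0, hn⟩⟩
  obtain ⟨x₀, hx₀⟩ := exists_forall_mpRho_le A
  obtain ⟨i, hi⟩ := exists_transGen_tight A hx₀
  obtain ⟨k, hk, hkn, g, hg⟩ := hi.exists_cycle
  have hmean := cycleMean_eq_of_forall_slack_eq A hk g x₀ _ hg
  refine ⟨⟨x₀, le_antisymm (mpCycleMean_le_mpRho A hn x₀) ?_⟩, ?_⟩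
  · exact hmean.symm.trans_le (cycleMean_le_mpCycleMean A hk (by simpa using hkn) g)
  · rintro _ ⟨x, rfl⟩
    exact mpCycleMean_le_mpRho A hn x

end
end

section
/- Let n ≥ 1, let A be an n×n nonnegative real matrix with positive max-times spectral radius λ = λ(A), and let C be an n×n nonnegative real matrix such that max_{1≤k≤n} max_i (C^{⊗k})_{ii} ≤ 1. Then the minimum of max_{i,j} A_{ij} x_j / x_i over all positive vectors x ∈ ℝ_{>0}^n satisfying max_j C_{ij} x_j ≤ x_i for every i equals θ = max( λ, max_{1≤k≤n−1} max_{(i_1,…,i_k) ∈ ℕ^k, 1 ≤ i_1+⋯+i_k ≤ n−k} ( max_i (A ⊗ C^{⊗i_1} ⊗ A ⊗ C^{⊗i_2} ⊗ ⋯ ⊗ A ⊗ C^{⊗i_k})_{ii} )^{1/k} ), and this minimum is attained. -/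
open scoped BigOperators

noncomputable section

/-!
If `x > 0` satisfies `C ⊗ x ≤ x` and `μ = max A_{ij} x_j / x_i`, then `A_{ij} x_j ≤ μ x_i` and
`C_{ij} x_j ≤ x_i`; multiplying these along a cycle of `A`, or along the closed walk behind a
diagonal entry of `A ⊗ C^{⊗i₁} ⊗ ⋯ ⊗ A ⊗ C^{⊗i_k}`, bounds its weight by `μ^k`, so `θ ≤ μ`.

Conversely let `S = max (A / θ, C)` entrywise. A closed walk of `S` of length at most `n` has
weight at most `1`: with `C`-steps only, this is the trace hypothesis on `C`; otherwise, rotated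
to start with an `A`-step, it splits into blocks `A ⊗ C^{⊗i}`, and its weight is at most `θ^{-k}`
times a diagonal entry of the corresponding chain with `k` blocks, which is at most `θ^k` by the
definition of `θ`. Cutting out cycles then bounds the weights of all walks of `S`, and
`x_i = sup {weight of a walk of S starting at i}` satisfies `S ⊗ x ≤ x`, that is,
`A ⊗ x ≤ θ x` and `C ⊗ x ≤ x`.
-/

open Finset

section PathWeight

variable {α R : Type*}

def pathWeight [CommMonoid R] (S : Matrix α α R) (f : ℕ → α) (m : ℕ) : R :=
  ∏ t ∈ range m, S (f t) (f (t + 1))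

def pathAppend (f : ℕ → α) (a : ℕ) (g : ℕ → α) : ℕ → α :=
  fun t => if t ≤ a then f t else g (t - a)

section CommMonoid

variable [CommMonoid R] (S : Matrix α α R)

@[simp] lemma pathWeight_zero (f : ℕ → α) : pathWeight S f 0 = 1 := prod_range_zero _

lemma pathWeight_succ (f : ℕ → α) (m : ℕ) :
    pathWeight S f (m + 1) = pathWeight S f m * S (f m) (f (m + 1)) :=
  prod_range_succ _ _

lemma pathWeight_succ' (f : ℕ → α) (m : ℕ) :
    pathWeight S f (m + 1) = S (f 0) (f 1) * pathWeight S (fun t => f (t + 1)) m := by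
  rw [pathWeight, prod_range_succ', mul_comm]
  rfl

lemma pathWeight_add (f : ℕ → α) (a b : ℕ) :
    pathWeight S f (a + b) = pathWeight S f a * pathWeight S (fun t => f (a + t)) b := by
  simp only [pathWeight, prod_range_add, add_assoc]

lemma pathWeight_congr {f g : ℕ → α} {m : ℕ} (h : ∀ t ≤ m, f t = g t) :
    pathWeight S f m = pathWeight S g m :=
  prod_congr rfl fun t ht => by
    have := mem_range.1 ht
    rw [h t (by omega), h (t + 1) (by omega)]

lemma pathWeight_append {f g : ℕ → α} {a : ℕ} (h : f a = g 0) (b : ℕ) :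
    pathWeight S (pathAppend f a g) (a + b) = pathWeight S f a * pathWeight S g b := by
  rw [pathWeight_add]
  congr 1
  · exact pathWeight_congr S fun t ht => if_pos ht
  · congr 1
    funext t
    rcases t.eq_zero_or_pos with rfl | ht
    · simp [pathAppend, h]
    · simp [pathAppend, show ¬a + t ≤ a by omega]

lemma pathWeight_rotate {f : ℕ → α} {m t : ℕ} (hf : f m = f 0) (ht : t ≤ m) :
    pathWeight S (pathAppend (fun s => f (t + s)) (m - t) f) m = pathWeight S f m := by
  obtain ⟨d, rfl⟩ := Nat.exists_eq_add_of_le ht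
  rw [Nat.add_sub_cancel_left, add_comm t d, pathWeight_append S (by simpa [add_comm] using hf),
    mul_comm, ← pathWeight_add, add_comm]

lemma pathWeight_cons (i : α) (f : ℕ → α) (m : ℕ) :
    pathWeight S (fun t => if t = 0 then i else f (t - 1)) (m + 1) =
      S i (f 0) * pathWeight S f m := by
  simp [pathWeight_succ']

end CommMonoid

variable {S : Matrix α α ℝ}

lemma pathWeight_nonneg (hS : ∀ i j, 0 ≤ S i j) (f : ℕ → α) (m : ℕ) : 0 ≤ pathWeight S f m :=
  prod_nonneg fun _ _ => hS _ _

lemma pathWeight_le_pow {M : ℝ} (hS : ∀ i j, 0 ≤ S i j) (hM : ∀ i j, S i j ≤ M)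
    (f : ℕ → α) (m : ℕ) : pathWeight S f m ≤ M ^ m := by
  simpa [pathWeight] using
    prod_le_prod (s := range m) (fun t _ => hS (f t) (f (t + 1))) fun t _ => hM (f t) (f (t + 1))

end PathWeight

section MaxTimes

variable {n : ℕ} {A C M N S : Matrix (Fin n) (Fin n) ℝ}

lemma le_mtMul (M N : Matrix (Fin n) (Fin n) ℝ) (i k j : Fin n) :
    M i k * N k j ≤ mtMul M N i j :=
  le_ciSup (f := fun k => M i k * N k j) (Set.finite_range _).bddAbove k

lemma exists_mtMul_eq (M N : Matrix (Fin n) (Fin n) ℝ) (i j : Fin n) :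
    ∃ k, mtMul M N i j = M i k * N k j := by
  have : Nonempty (Fin n) := ⟨i⟩
  obtain ⟨k, hk⟩ := exists_eq_ciSup_of_finite (f := fun k => M i k * N k j)
  exact ⟨k, hk.symm⟩

lemma mtMul_nonneg (hM : ∀ i j, 0 ≤ M i j) (hN : ∀ i j, 0 ≤ N i j) (i j : Fin n) :
    0 ≤ mtMul M N i j :=
  Real.iSup_nonneg fun k => mul_nonneg (hM i k) (hN k j)

lemma mtMul_one (hM : ∀ i j, 0 ≤ M i j) : mtMul M 1 = M := by
  ext i j
  refine le_antisymm ?_ (by simpa using le_mtMul M 1 i j j)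
  obtain ⟨k, hk⟩ := exists_mtMul_eq M 1 i j
  rw [hk, Matrix.one_apply]
  split_ifs with h
  · rw [h, mul_one]
  · rw [mul_zero]
    exact hM i j

lemma mtMul_apply_mul_le (hM : ∀ i j, 0 ≤ M i j) (N S : Matrix (Fin n) (Fin n) ℝ)
    (p q r : Fin n) : mtMul M N p q * S q r ≤ mtMul M (mtMul N S) p r := by
  obtain ⟨l, hl⟩ := exists_mtMul_eq M N p q
  calc mtMul M N p q * S q r = M p l * (N l q * S q r) := by rw [hl, mul_assoc]
    _ ≤ M p l * mtMul N S l r := mul_le_mul_of_nonneg_left (le_mtMul N S l q r) (hM p l)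
    _ ≤ mtMul M (mtMul N S) p r := le_mtMul _ _ _ _ _

lemma mtPow_zero (S : Matrix (Fin n) (Fin n) ℝ) : mtPow S 0 = 1 := by
  ext i j
  simp [mtPow, Matrix.one_apply]

lemma mtPow_nonneg_s4 (hS : ∀ i j, 0 ≤ S i j) : ∀ (m : ℕ) (i j : Fin n), 0 ≤ mtPow S m i j
  | 0 => by simp [mtPow_zero, Matrix.one_apply, apply_ite]
  | m + 1 => mtMul_nonneg (mtPow_nonneg_s4 hS m) hS

lemma mtChain_zero (A C : Matrix (Fin n) (Fin n) ℝ) (g : Fin 0 → ℕ) : mtChain A C 0 g = 1 := by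
  ext i j
  simp [mtChain, Matrix.one_apply]

lemma mtChain_cons (A C : Matrix (Fin n) (Fin n) ℝ) {k : ℕ} (c : ℕ) (g : Fin k → ℕ) :
    mtChain A C (k + 1) (Fin.cons c g) = mtMul (mtMul A (mtPow C c)) (mtChain A C k g) :=
  rfl

lemma mtChain_nonneg (hA : ∀ i j, 0 ≤ A i j) (hC : ∀ i j, 0 ≤ C i j) :
    ∀ (k : ℕ) (g : Fin k → ℕ) (i j : Fin n), 0 ≤ mtChain A C k g i j
  | 0, g => by simp [mtChain_zero, Matrix.one_apply, apply_ite]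
  | k + 1, _ => mtMul_nonneg (mtMul_nonneg hA (mtPow_nonneg_s4 hC _)) (mtChain_nonneg hA hC k _)

lemma pathWeight_le_mtPow (hS : ∀ i j, 0 ≤ S i j) (f : ℕ → Fin n) :
    ∀ m, pathWeight S f m ≤ mtPow S m (f 0) (f m)
  | 0 => by simp [mtPow_zero]
  | m + 1 => by
    rw [pathWeight_succ]
    exact (mul_le_mul_of_nonneg_right (pathWeight_le_mtPow hS f m) (hS _ _)).trans
      (le_mtMul _ _ _ _ _)

end MaxTimes

section Subeigen

variable {n : ℕ} {A C M N S : Matrix (Fin n) (Fin n) ℝ} {x : Fin n → ℝ} {μ : ℝ}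

/-- `M ⊗ x ≤ μ x`. -/
def IsMtSubeigen (M : Matrix (Fin n) (Fin n) ℝ) (μ : ℝ) (x : Fin n → ℝ) : Prop :=
  ∀ i j, M i j * x j ≤ μ * x i

lemma IsMtSubeigen.mul {a b : ℝ} (hM : ∀ i j, 0 ≤ M i j) (hb : 0 ≤ b)
    (hMx : IsMtSubeigen M a x) (hNx : IsMtSubeigen N b x) : IsMtSubeigen (mtMul M N) (a * b) x := by
  intro i j
  obtain ⟨k, hk⟩ := exists_mtMul_eq M N i j
  calc mtMul M N i j * x j = M i k * (N k j * x j) := by rw [hk, mul_assoc]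
    _ ≤ M i k * (b * x k) := mul_le_mul_of_nonneg_left (hNx k j) (hM i k)
    _ = b * (M i k * x k) := by ring
    _ ≤ b * (a * x i) := mul_le_mul_of_nonneg_left (hMx i k) hb
    _ = a * b * x i := by ring

lemma isMtSubeigen_one (hx : ∀ i, 0 ≤ x i) : IsMtSubeigen 1 1 x := by
  intro i j
  rw [Matrix.one_apply]
  split_ifs with h
  · rw [h]
  · simpa using hx i

lemma IsMtSubeigen.pow (hS : ∀ i j, 0 ≤ S i j) (hx : ∀ i, 0 ≤ x i) (hμ : 0 ≤ μ)
    (h : IsMtSubeigen S μ x) : ∀ m, IsMtSubeigen (mtPow S m) (μ ^ m) x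
  | 0 => by simpa [mtPow_zero] using isMtSubeigen_one hx
  | m + 1 => by
    rw [pow_succ]
    exact (h.pow hS hx hμ m).mul (mtPow_nonneg_s4 hS m) hμ h

lemma IsMtSubeigen.chain (hA : ∀ i j, 0 ≤ A i j) (hC : ∀ i j, 0 ≤ C i j)
    (hx : ∀ i, 0 ≤ x i) (hμ : 0 ≤ μ) (hxA : IsMtSubeigen A μ x) (hxC : IsMtSubeigen C 1 x) :
    ∀ (k : ℕ) (g : Fin k → ℕ), IsMtSubeigen (mtChain A C k g) (μ ^ k) x
  | 0, g => by simpa [mtChain_zero] using isMtSubeigen_one hx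
  | k + 1, g => by
    have hCg : IsMtSubeigen (mtPow C (g 0)) 1 x := by simpa using hxC.pow hC hx zero_le_one (g 0)
    have hblock := hxA.mul hA zero_le_one hCg
    have h := hblock.mul (mtMul_nonneg hA (mtPow_nonneg_s4 hC _)) (pow_nonneg hμ k)
      (hxA.chain hA hC hx hμ hxC k fun t => g t.succ)
    rw [mul_one, ← pow_succ'] at h
    exact h

lemma IsMtSubeigen.mono (hMN : ∀ i j, M i j ≤ N i j) (hx : ∀ i, 0 ≤ x i)
    (h : IsMtSubeigen N μ x) : IsMtSubeigen M μ x :=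
  fun i j => (mul_le_mul_of_nonneg_right (hMN i j) (hx j)).trans (h i j)

lemma IsMtSubeigen.apply_self_le {i : Fin n} (hx : 0 < x i) (h : IsMtSubeigen M μ x) :
    M i i ≤ μ :=
  le_of_mul_le_mul_right (h i i) hx

lemma isMtSubeigen_one_iff : IsMtSubeigen C 1 x ↔ ∀ i, (⨆ j, C i j * x j) ≤ x i := by
  refine ⟨fun h i => ?_, fun h i j => ?_⟩
  · have : Nonempty (Fin n) := ⟨i⟩
    exact ciSup_le fun j => (h i j).trans_eq (one_mul _)
  · rw [one_mul]
    exact (le_ciSup (f := fun j => C i j * x j) (Set.finite_range _).bddAbove j).trans (h i)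

lemma iSup_div_le_iff (hx : ∀ i, 0 < x i) (hμ : 0 ≤ μ) :
    (⨆ p : Fin n × Fin n, A p.1 p.2 * x p.2 / x p.1) ≤ μ ↔ IsMtSubeigen A μ x := by
  refine ⟨fun h i j => ?_, fun h => Real.iSup_le (fun p => ?_) hμ⟩
  · rw [← div_le_iff₀ (hx i)]
    exact (le_ciSup (f := fun p : Fin n × Fin n => A p.1 p.2 * x p.2 / x p.1)
      (Set.finite_range _).bddAbove (i, j)).trans h
  · rw [div_le_iff₀ (hx p.1)]
    exact h p.1 p.2

end Subeigen

section CycleMeans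

variable {n : ℕ} {A C : Matrix (Fin n) (Fin n) ℝ} {x : Fin n → ℝ} {μ : ℝ}

def mtCycleMeans (A : Matrix (Fin n) (Fin n) ℝ) : Set ℝ :=
  { r : ℝ | ∃ (k : ℕ) (hk : 0 < k), k ≤ n ∧ ∃ f : Fin k → Fin n,
    r = (∏ t : Fin k, A (f t) (f ⟨((t : ℕ) + 1) % k, Nat.mod_lt _ hk⟩)) ^ ((k : ℝ)⁻¹) }

def mtChainMeans (A C : Matrix (Fin n) (Fin n) ℝ) : Set ℝ :=
  { r : ℝ | ∃ k : ℕ, 0 < k ∧ k ≤ n - 1 ∧ ∃ f : Fin k → ℕ,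
    1 ≤ ∑ t, f t ∧ (∑ t, f t) ≤ n - k ∧
    r = (⨆ i, mtChain A C k f i i) ^ ((k : ℝ)⁻¹) }

lemma mtTheta_eq (A C : Matrix (Fin n) (Fin n) ℝ) :
    mtTheta A C = max (sSup (mtCycleMeans A)) (sSup (mtChainMeans A C)) :=
  rfl

lemma prod_cycle_eq_pathWeight (A : Matrix (Fin n) (Fin n) ℝ) {k : ℕ} {f : ℕ → Fin n}
    (hf : f k = f 0) : ∏ t : Fin k, A (f t) (f ((t + 1) % k)) = pathWeight A f k := by
  rw [Fin.prod_univ_eq_prod_range (fun t => A (f t) (f ((t + 1) % k)))]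
  refine prod_congr rfl fun t ht => ?_
  rcases (show t + 1 ≤ k from mem_range.1 ht).lt_or_eq with h | h
  · rw [Nat.mod_eq_of_lt h]
  · rw [h, Nat.mod_self, hf]

lemma le_pow_of_rpow_inv_le {P θ : ℝ} {k : ℕ} (hP : 0 ≤ P) (hk : 0 < k)
    (h : P ^ (k : ℝ)⁻¹ ≤ θ) : P ≤ θ ^ k := by
  have hθ : 0 ≤ θ := (Real.rpow_nonneg hP _).trans h
  rwa [Real.rpow_inv_le_iff_of_pos hP hθ (by positivity), Real.rpow_natCast] at h

lemma mem_upperBounds_mtCycleMeans (hA : ∀ i j, 0 ≤ A i j) (hx : ∀ i, 0 < x i) (hμ : 0 ≤ μ)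
    (hxA : IsMtSubeigen A μ x) : μ ∈ upperBounds (mtCycleMeans A) := by
  rintro r ⟨k, hk, -, F, rfl⟩
  set f : ℕ → Fin n := fun t => F ⟨t % k, Nat.mod_lt _ hk⟩
  have hf : f k = f 0 := by simp [f]
  have hF : ∏ t : Fin k, A (F t) (F ⟨((t : ℕ) + 1) % k, Nat.mod_lt _ hk⟩) = pathWeight A f k := by
    rw [← prod_cycle_eq_pathWeight A hf]
    simp [f, Nat.mod_eq_of_lt]
  rw [Real.rpow_inv_le_iff_of_pos (prod_nonneg fun _ _ => hA _ _) hμ (by positivity),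
    Real.rpow_natCast, hF]
  calc pathWeight A f k ≤ mtPow A k (f 0) (f k) := pathWeight_le_mtPow hA f k
    _ ≤ μ ^ k := by
      rw [hf]
      exact (hxA.pow hA (fun i => (hx i).le) hμ k).apply_self_le (hx _)

lemma mem_upperBounds_mtChainMeans (hA : ∀ i j, 0 ≤ A i j) (hC : ∀ i j, 0 ≤ C i j)
    (hx : ∀ i, 0 < x i) (hμ : 0 ≤ μ) (hxA : IsMtSubeigen A μ x) (hxC : IsMtSubeigen C 1 x) :
    μ ∈ upperBounds (mtChainMeans A C) := by
  rintro r ⟨k, hk, -, g, -, -, rfl⟩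
  have hchain := hxA.chain hA hC (fun i => (hx i).le) hμ hxC k g
  rw [Real.rpow_inv_le_iff_of_pos (Real.iSup_nonneg fun i => mtChain_nonneg hA hC k g i i) hμ
    (by positivity), Real.rpow_natCast]
  exact Real.iSup_le (fun i => hchain.apply_self_le (hx i)) (by positivity)

lemma mtTheta_le_iSup_div (hA : ∀ i j, 0 ≤ A i j) (hC : ∀ i j, 0 ≤ C i j)
    (hx : ∀ i, 0 < x i) (hxC : IsMtSubeigen C 1 x) :
    mtTheta A C ≤ ⨆ p : Fin n × Fin n, A p.1 p.2 * x p.2 / x p.1 := by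
  have hμ : 0 ≤ ⨆ p : Fin n × Fin n, A p.1 p.2 * x p.2 / x p.1 :=
    Real.iSup_nonneg fun p => div_nonneg (mul_nonneg (hA _ _) (hx _).le) (hx _).le
  have hxA := (iSup_div_le_iff hx hμ).1 le_rfl
  rw [mtTheta_eq]
  exact max_le (Real.sSup_le (mem_upperBounds_mtCycleMeans hA hx hμ hxA) hμ)
    (Real.sSup_le (mem_upperBounds_mtChainMeans hA hC hx hμ hxA hxC) hμ)

end CycleMeans

section Subinvariant

variable {n : ℕ} {S : Matrix (Fin n) (Fin n) ℝ}

lemma exists_lt_le_apply_eq (f : ℕ → Fin n) : ∃ a b, a < b ∧ b ≤ n ∧ f a = f b := by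
  obtain ⟨u, v, huv, he⟩ :=
    Fintype.exists_ne_map_eq_of_card_lt (fun t : Fin (n + 1) => f t) (by simp)
  rcases lt_or_gt_of_ne (Fin.val_ne_of_ne huv) with h | h
  · exact ⟨u, v, h, Nat.lt_succ_iff.1 v.2, he⟩
  · exact ⟨v, u, h, Nat.lt_succ_iff.1 u.2, he.symm⟩

lemma exists_forall_pathWeight_le (hS : ∀ i j, 0 ≤ S i j)
    (hcyc : ∀ m f, 0 < m → m ≤ n → f m = f 0 → pathWeight S f m ≤ 1) :
    ∃ K, ∀ m f, pathWeight S f m ≤ K := by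
  set M := max 1 (⨆ p : Fin n × Fin n, S p.1 p.2)
  refine ⟨M ^ n, fun m => ?_⟩
  induction m using Nat.strong_induction_on with
  | _ m ih =>
  intro f
  by_cases hm : m < n
  · have hSM : ∀ i j, S i j ≤ M := fun i j => le_max_of_le_right
      (le_ciSup (f := fun p : Fin n × Fin n => S p.1 p.2) (Set.finite_range _).bddAbove (i, j))
    exact (pathWeight_le_pow hS hSM f m).trans (pow_le_pow_right₀ (le_max_left _ _) hm.le)
  obtain ⟨a, b, hab, hbn, hfab⟩ := exists_lt_le_apply_eq f
  obtain ⟨d, rfl⟩ := Nat.exists_eq_add_of_lt hab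
  obtain ⟨e, rfl⟩ := Nat.exists_eq_add_of_le (show a + d + 1 ≤ m by omega)
  have hcycle : pathWeight S (fun t => f (a + t)) (d + 1) ≤ 1 :=
    hcyc _ _ d.succ_pos (by omega) (by simpa [add_assoc] using hfab.symm)
  calc pathWeight S f (a + d + 1 + e)
      = pathWeight S f a * (pathWeight S (fun t => f (a + t)) (d + 1) *
          pathWeight S (fun t => f (a + d + 1 + t)) e) := by
        rw [add_assoc a, add_assoc a, pathWeight_add, pathWeight_add]
        simp only [add_assoc]
    _ ≤ pathWeight S f a * pathWeight S (fun t => f (a + d + 1 + t)) e := by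
        gcongr
        · exact pathWeight_nonneg hS _ _
        · exact mul_le_of_le_one_left (pathWeight_nonneg hS _ _) hcycle
    _ = pathWeight S (pathAppend f a fun t => f (a + d + 1 + t)) (a + e) :=
        (pathWeight_append S (by simpa using hfab) e).symm
    _ ≤ M ^ n := ih _ (by omega) _

lemma exists_pos_isMtSubeigen_one (hS : ∀ i j, 0 ≤ S i j)
    (hcyc : ∀ m f, 0 < m → m ≤ n → f m = f 0 → pathWeight S f m ≤ 1) :
    ∃ x : Fin n → ℝ, (∀ i, 0 < x i) ∧ IsMtSubeigen S 1 x := by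
  obtain ⟨K, hK⟩ := exists_forall_pathWeight_le hS hcyc
  let walks : Fin n → Set ℝ := fun i => {w | ∃ m f, f 0 = i ∧ pathWeight S f m = w}
  have hone : ∀ i, 1 ∈ walks i := fun i => ⟨0, fun _ => i, rfl, pathWeight_zero _ _⟩
  have hbdd : ∀ i, BddAbove (walks i) := fun i => ⟨K, by rintro _ ⟨m, f, -, rfl⟩; exact hK m f⟩
  have hx : ∀ i, 1 ≤ sSup (walks i) := fun i => le_csSup (hbdd i) (hone i)
  refine ⟨fun i => sSup (walks i), fun i => one_pos.trans_le (hx i), fun i j => ?_⟩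
  rw [one_mul]
  rcases (hS i j).eq_or_lt with h | h
  · rw [← h, zero_mul]
    exact zero_le_one.trans (hx i)
  rw [← le_div_iff₀' h]
  refine csSup_le ⟨1, hone j⟩ ?_
  rintro _ ⟨m, f, rfl, rfl⟩
  rw [le_div_iff₀' h, ← pathWeight_cons]
  exact le_csSup (hbdd i) ⟨m + 1, _, rfl, rfl⟩

end Subinvariant

section Splitting

variable {n : ℕ} {A C S : Matrix (Fin n) (Fin n) ℝ} {θ : ℝ}

lemma pathWeight_le_one_of_mtPow_le_one (hC : ∀ i j, 0 ≤ C i j)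
    (hTr : ∀ k : ℕ, 1 ≤ k → k ≤ n → ∀ i, mtPow C k i i ≤ 1) {m : ℕ} {f : ℕ → Fin n}
    (hm : 0 < m) (hmn : m ≤ n) (hf : f m = f 0) : pathWeight C f m ≤ 1 :=
  (pathWeight_le_mtPow hC f m).trans (hf ▸ hTr m hm hmn (f 0))

/-- The walk is read after a pending block `A ⊗ C^{⊗c}` ending at its start: a step with
`θ S ≤ A` opens a new block of the chain, a step with `S ≤ C` lengthens the current one. -/
lemma exists_mtChain_ge_pathWeight (hA : ∀ i j, 0 ≤ A i j) (hC : ∀ i j, 0 ≤ C i j)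
    (hθ : 0 ≤ θ) (hS : ∀ i j, θ * S i j ≤ A i j ∨ S i j ≤ C i j) (hS0 : ∀ i j, 0 ≤ S i j) :
    ∀ (m c : ℕ) (f : ℕ → Fin n) (p : Fin n), ∃ (k : ℕ) (g : Fin (k + 1) → ℕ),
      k + ∑ t, g t = c + m ∧
      θ ^ k * (mtMul A (mtPow C c) p (f 0) * pathWeight S f m) ≤ mtChain A C (k + 1) g p (f m)
  | 0, c, f, p => ⟨0, fun _ => c, by simp, by
      change _ ≤ mtMul (mtMul A (mtPow C c)) (mtChain A C 0 _) p (f 0)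
      rw [mtChain_zero, mtMul_one (mtMul_nonneg hA (mtPow_nonneg_s4 hC c))]
      simp⟩
  | m + 1, c, f, p => by
    have hX := mtMul_nonneg hA (mtPow_nonneg_s4 hC c) p (f 0)
    have hW := pathWeight_nonneg hS0 (fun t => f (t + 1)) m
    rw [pathWeight_succ']
    rcases hS (f 0) (f 1) with hAstep | hCstep
    · obtain ⟨k, g, hsum, hle⟩ :=
        exists_mtChain_ge_pathWeight hA hC hθ hS hS0 m 0 (fun t => f (t + 1)) (f 0)
      refine ⟨k + 1, Fin.cons c g, by rw [Fin.sum_cons]; omega, ?_⟩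
      rw [mtChain_cons]
      calc θ ^ (k + 1) * (mtMul A (mtPow C c) p (f 0) * (S (f 0) (f 1) * pathWeight S _ m))
          = mtMul A (mtPow C c) p (f 0) *
              (θ ^ k * (θ * S (f 0) (f 1) * pathWeight S (fun t => f (t + 1)) m)) := by ring
        _ ≤ mtMul A (mtPow C c) p (f 0) *
              (θ ^ k * (mtMul A (mtPow C 0) (f 0) (f 1) * pathWeight S _ m)) := by
            rw [mtPow_zero, mtMul_one hA]
            gcongr
        _ ≤ mtMul A (mtPow C c) p (f 0) * mtChain A C (k + 1) g (f 0) (f (m + 1)) := by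
            gcongr
        _ ≤ _ := le_mtMul _ _ _ _ _
    · obtain ⟨k, g, hsum, hle⟩ :=
        exists_mtChain_ge_pathWeight hA hC hθ hS hS0 m (c + 1) (fun t => f (t + 1)) p
      refine ⟨k, g, by omega, ?_⟩
      calc θ ^ k * (mtMul A (mtPow C c) p (f 0) * (S (f 0) (f 1) * pathWeight S _ m))
          = θ ^ k * (mtMul A (mtPow C c) p (f 0) * S (f 0) (f 1) * pathWeight S _ m) := by ring
        _ ≤ θ ^ k * (mtMul A (mtPow C c) p (f 0) * C (f 0) (f 1) * pathWeight S _ m) := by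
            gcongr
        _ ≤ θ ^ k * (mtMul A (mtPow C (c + 1)) p (f 1) * pathWeight S _ m) := by
            gcongr
            exact mtMul_apply_mul_le hA _ _ _ _ _
        _ ≤ _ := hle

end Splitting

section UpperBound

variable {n : ℕ} {A C S : Matrix (Fin n) (Fin n) ℝ} {θ : ℝ}

lemma pathWeight_le_one_of_closed (hA : ∀ i j, 0 ≤ A i j) (hC : ∀ i j, 0 ≤ C i j)
    (hθ : 0 < θ) (hS : ∀ i j, θ * S i j ≤ A i j ∨ S i j ≤ C i j) (hS0 : ∀ i j, 0 ≤ S i j)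
    (hchain : ∀ (k : ℕ) (g : Fin (k + 1) → ℕ), k + 1 + ∑ t, g t ≤ n →
      ∀ i, mtChain A C (k + 1) g i i ≤ θ ^ (k + 1))
    (hTr : ∀ k : ℕ, 1 ≤ k → k ≤ n → ∀ i, mtPow C k i i ≤ 1) {m : ℕ} {f : ℕ → Fin n}
    (hm : 0 < m) (hmn : m ≤ n) (hf : f m = f 0) : pathWeight S f m ≤ 1 := by
  by_cases hAstep : ∃ t < m, θ * S (f t) (f (t + 1)) ≤ A (f t) (f (t + 1))
  swap
  · push Not at hAstep
    refine (prod_le_prod (fun t _ => hS0 _ _) fun t ht => ?_).trans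
      (pathWeight_le_one_of_mtPow_le_one hC hTr hm hmn hf)
    exact (hS _ _).resolve_left (hAstep t (mem_range.1 ht)).not_ge
  obtain ⟨t, htm, ht⟩ := hAstep
  set r := pathAppend (fun s => f (t + s)) (m - t) f
  have hr0 : r 0 = f t := by simp [r, pathAppend]
  have hr1 : r 1 = f (t + 1) := by simp [r, pathAppend, show 1 ≤ m - t by omega]
  have hrm : r m = r 0 := by
    rcases t.eq_zero_or_pos with rfl | h
    · simp [r, pathAppend, hf]
    · simp [r, pathAppend, show ¬m ≤ m - t by omega, show m - (m - t) = t by omega]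
  obtain ⟨k, g, hsum, hle⟩ :=
    exists_mtChain_ge_pathWeight hA hC hθ.le hS hS0 (m - 1) 0 (fun s => r (s + 1)) (r 0)
  have hW : pathWeight S f m = S (r 0) (r 1) * pathWeight S (fun s => r (s + 1)) (m - 1) := by
    rw [← pathWeight_rotate S hf htm.le, ← pathWeight_succ', Nat.sub_add_cancel hm]
  have hpow : θ ^ (k + 1) * pathWeight S f m ≤ θ ^ (k + 1) * 1 :=
    calc θ ^ (k + 1) * pathWeight S f m
        = θ ^ k * (θ * S (r 0) (r 1) * pathWeight S (fun s => r (s + 1)) (m - 1)) := by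
          rw [hW]; ring
      _ ≤ θ ^ k * (mtMul A (mtPow C 0) (r 0) (r 1) *
            pathWeight S (fun s => r (s + 1)) (m - 1)) := by
          rw [mtPow_zero, mtMul_one hA, hr0, hr1]
          gcongr
          exact pathWeight_nonneg hS0 _ _
      _ ≤ mtChain A C (k + 1) g (r 0) (r (m - 1 + 1)) := hle
      _ ≤ θ ^ (k + 1) * 1 := by
          rw [Nat.sub_add_cancel hm, hrm, mul_one]
          exact hchain k g (by omega) _
  exact le_of_mul_le_mul_left hpow (by positivity)

lemma exists_pathWeight_ge_mtChain (hA : ∀ i j, 0 ≤ A i j) :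
    ∀ (k : ℕ) (g : Fin (k + 1) → ℕ), (∀ t, g t = 0) → ∀ i j : Fin n, ∃ f : ℕ → Fin n,
      f 0 = i ∧ f (k + 1) = j ∧ mtChain A C (k + 1) g i j ≤ pathWeight A f (k + 1)
  | 0, g, hg, i, j => by
    refine ⟨fun t => if t = 0 then i else j, rfl, rfl, ?_⟩
    change mtMul (mtMul A (mtPow C (g 0))) (mtChain A C 0 _) i j ≤ _
    rw [hg 0, mtPow_zero, mtMul_one hA, mtChain_zero, mtMul_one hA]
    simp [pathWeight]
  | k + 1, g, hg, i, j => by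
    obtain ⟨l, hl⟩ :=
      exists_mtMul_eq (mtMul A (mtPow C (g 0))) (mtChain A C (k + 1) fun t => g t.succ) i j
    obtain ⟨f, hf0, hfk, hle⟩ := exists_pathWeight_ge_mtChain hA k _ (fun t => hg t.succ) l j
    refine ⟨fun t => if t = 0 then i else f (t - 1), rfl, by simpa using hfk, ?_⟩
    rw [pathWeight_cons, hf0]
    change mtMul (mtMul A (mtPow C (g 0))) (mtChain A C (k + 1) _) i j ≤ _
    rw [hl, hg 0, mtPow_zero, mtMul_one hA]
    exact mul_le_mul_of_nonneg_left hle (hA i l)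

lemma mtChain_apply_self_le_mtTheta (hA : ∀ i j, 0 ≤ A i j) (hC : ∀ i j, 0 ≤ C i j)
    (hcyc : BddAbove (mtCycleMeans A)) (hchain : BddAbove (mtChainMeans A C)) {k : ℕ}
    (g : Fin (k + 1) → ℕ) (hkn : k + 1 + ∑ t, g t ≤ n) (i : Fin n) :
    mtChain A C (k + 1) g i i ≤ mtTheta A C ^ (k + 1) := by
  rw [mtTheta_eq]
  rcases Nat.eq_zero_or_pos (∑ t, g t) with hg | hg
  · obtain ⟨f, hf0, hfk, hle⟩ := exists_pathWeight_ge_mtChain hA k g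
      (fun t => sum_eq_zero_iff.1 hg t (mem_univ t)) i i
    have hmem : (∏ t : Fin (k + 1), A (f t) (f ((t + 1) % (k + 1)))) ^ ((↑(k + 1) : ℝ)⁻¹) ∈
        mtCycleMeans A := ⟨k + 1, k.succ_pos, by omega, fun t => f t, rfl⟩
    rw [prod_cycle_eq_pathWeight A (hfk.trans hf0.symm)] at hmem
    exact hle.trans (le_pow_of_rpow_inv_le (pathWeight_nonneg hA f _) k.succ_pos
      ((le_csSup hcyc hmem).trans (le_max_left _ _)))
  · have hmem : (⨆ j, mtChain A C (k + 1) g j j) ^ ((↑(k + 1) : ℝ)⁻¹) ∈ mtChainMeans A C :=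
      ⟨k + 1, k.succ_pos, by omega, g, hg, by omega, rfl⟩
    exact (le_ciSup (f := fun j => mtChain A C (k + 1) g j j) (Set.finite_range _).bddAbove i).trans
      (le_pow_of_rpow_inv_le (Real.iSup_nonneg fun j => mtChain_nonneg hA hC _ g j j)
        k.succ_pos ((le_csSup hchain hmem).trans (le_max_right _ _)))

lemma exists_isMtSubeigen_mtTheta (hA : ∀ i j, 0 ≤ A i j) (hC : ∀ i j, 0 ≤ C i j)
    (hθ : 0 < mtTheta A C) (hcyc : BddAbove (mtCycleMeans A))
    (hchain : BddAbove (mtChainMeans A C))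
    (hTr : ∀ k : ℕ, 1 ≤ k → k ≤ n → ∀ i, mtPow C k i i ≤ 1) :
    ∃ x : Fin n → ℝ, (∀ i, 0 < x i) ∧ IsMtSubeigen A (mtTheta A C) x ∧ IsMtSubeigen C 1 x := by
  set θ := mtTheta A C
  set S : Matrix (Fin n) (Fin n) ℝ := Matrix.of fun i j => max (A i j / θ) (C i j)
  have hS0 : ∀ i j, 0 ≤ S i j := fun i j => (hC i j).trans (le_max_right _ _)
  have hS : ∀ i j, θ * S i j ≤ A i j ∨ S i j ≤ C i j := fun i j =>
    (max_choice (A i j / θ) (C i j)).imp (fun h => by simp [S, h, mul_div_cancel₀ _ hθ.ne'])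
      fun h => by simp [S, h]
  obtain ⟨x, hx, hxS⟩ := exists_pos_isMtSubeigen_one hS0 fun m f hm hmn hf =>
    pathWeight_le_one_of_closed hA hC hθ hS hS0
      (fun k g hkn i => mtChain_apply_self_le_mtTheta hA hC hcyc hchain g hkn i) hTr hm hmn hf
  refine ⟨x, hx, fun i j => ?_, hxS.mono (fun i j => le_max_right _ _) fun i => (hx i).le⟩
  calc A i j * x j = θ * (A i j / θ * x j) := by field_simp
    _ ≤ θ * (S i j * x j) := by gcongr; exacts [(hx j).le, le_max_left _ _]
    _ ≤ θ * x i := by simpa using mul_le_mul_of_nonneg_left (hxS i j) hθ.le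

end UpperBound

theorem mt_constrained_min_general {n : ℕ} (A C : Matrix (Fin n) (Fin n) ℝ)
    (hA : ∀ i j, 0 ≤ A i j) (hC : ∀ i j, 0 ≤ C i j)
    (hlam : 0 < mtSpecRad A)
    (hTr : ∀ k : ℕ, 1 ≤ k → k ≤ n → ∀ i, mtPow C k i i ≤ 1) :
    IsLeast { y : ℝ | ∃ x : Fin n → ℝ, (∀ i, 0 < x i) ∧
        (∀ i, (⨆ j, C i j * x j) ≤ x i) ∧
        y = ⨆ p : Fin n × Fin n, A p.1 p.2 * x p.2 / x p.1 }
      (mtTheta A C) := by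
  -- a feasible vector for `C` alone shows that both sets of means are bounded above
  obtain ⟨x₀, hx₀, hx₀C⟩ := exists_pos_isMtSubeigen_one hC fun _ _ hm hmn hf =>
    pathWeight_le_one_of_mtPow_le_one hC hTr hm hmn hf
  have hμ₀ : 0 ≤ ⨆ p : Fin n × Fin n, A p.1 p.2 * x₀ p.2 / x₀ p.1 :=
    Real.iSup_nonneg fun p => div_nonneg (mul_nonneg (hA _ _) (hx₀ _).le) (hx₀ _).le
  have hx₀A := (iSup_div_le_iff hx₀ hμ₀).1 le_rfl
  obtain ⟨x, hx, hxA, hxC⟩ := exists_isMtSubeigen_mtTheta hA hC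
    (hlam.trans_le (le_max_left _ _)) ⟨_, mem_upperBounds_mtCycleMeans hA hx₀ hμ₀ hx₀A⟩
    ⟨_, mem_upperBounds_mtChainMeans hA hC hx₀ hμ₀ hx₀A hx₀C⟩ hTr
  refine ⟨⟨x, hx, isMtSubeigen_one_iff.1 hxC,
    le_antisymm (mtTheta_le_iSup_div hA hC hx hxC) ?_⟩, ?_⟩
  · exact (iSup_div_le_iff hx (hlam.le.trans (le_max_left _ _))).2 hxA
  · rintro _ ⟨y, hy, hyC, rfl⟩
    exact mtTheta_le_iSup_div hA hC hy (isMtSubeigen_one_iff.2 hyC)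

/-- The minimum of `max_{i,j} A_{ij} x_j / x_i` over positive vectors `x`
satisfying `C ⊗ x ≤ x` equals `θ`, and it is attained. -/
theorem mt_constrained_min {n : ℕ} (hn : 1 ≤ n) (A C : Matrix (Fin n) (Fin n) ℝ)
    (hA : ∀ i j, 0 ≤ A i j) (hC : ∀ i j, 0 ≤ C i j)
    (hlam : 0 < mtSpecRad A)
    (hTr : ∀ k : ℕ, 1 ≤ k → k ≤ n → ∀ i, mtPow C k i i ≤ 1) :
    IsLeast { y : ℝ | ∃ x : Fin n → ℝ, (∀ i, 0 < x i) ∧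
        (∀ i, (⨆ j, C i j * x j) ≤ x i) ∧
        y = ⨆ p : Fin n × Fin n, A p.1 p.2 * x p.2 / x p.1 }
      (mtTheta A C) :=
  mt_constrained_min_general A C hA hC hlam hTr

end
end

section
/- Let n ≥ 1 and let A be an n×n nonnegative real matrix such that for all i, j either A_{ij} > 0 or A_{ji} > 0. Define B by B_{ij} = max(A_{ij}, (A_{ji})^{-}) where t^{-} = 1/t if t > 0 and t^{-} = 0 otherwise, and let μ = λ(B) be the max-times spectral radius of B. Then the minimum over positive vectors x ∈ ℝ_{>0}^n of ρ(A, x) = max( max_{i,j} A_{ij} x_j / x_i , max_{(i,j): A_{ij} > 0} x_i / (A_{ij} x_j) ) equals μ, and the minimum is attained. -/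
open scoped BigOperators

noncomputable section

/-!
For positive `x`, `ρ(A, x)` is the least `c ≥ 0` with `B i j * x j ≤ c * x i` for all
`i, j`. Such an inequality bounds the weight of every closed walk of length `k` in `B` by `c ^ k`,
because the factors `x` telescope around the walk; hence `λ(B) ≤ ρ(A, x)`.
Conversely, every cycle of `S = λ(B)⁻¹ • B` has weight at most `1`, so cutting cycles out of a
walk never decreases its weight. Consequently `x i`, the largest weight of an `S`-walk of length
`< n` starting at `i`, satisfies `S i j * x j ≤ x i` (prepend the edge `i → j` to an optimal walk
from `j` and shorten it), which gives `ρ(A, x) ≤ λ(B)`.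
-/

open Finset

namespace Matrix

variable {ι R : Type*}

def walkWeight [CommMonoid R] (S : Matrix ι ι R) (f : ℕ → ι) (k : ℕ) : R :=
  ∏ t ∈ range k, S (f t) (f (t + 1))

section CommMonoid

variable [CommMonoid R] (S : Matrix ι ι R)

theorem walkWeight_congr {f g : ℕ → ι} {k : ℕ} (h : ∀ t ≤ k, f t = g t) :
    S.walkWeight f k = S.walkWeight g k :=
  prod_congr rfl fun t ht => by
    rw [mem_range] at ht
    rw [h t ht.le, h (t + 1) ht]

theorem walkWeight_add (f : ℕ → ι) (a b : ℕ) :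
    S.walkWeight f (a + b) = S.walkWeight f a * S.walkWeight (fun t => f (a + t)) b := by
  simp only [walkWeight, prod_range_add, add_assoc]

theorem walkWeight_succ' (f : ℕ → ι) (k : ℕ) :
    S.walkWeight f (k + 1) = S (f 0) (f 1) * S.walkWeight (fun t => f (t + 1)) k := by
  rw [walkWeight, prod_range_succ', mul_comm]
  rfl

theorem walkWeight_smul (c : R) (f : ℕ → ι) (k : ℕ) :
    (c • S).walkWeight f k = c ^ k * S.walkWeight f k := by
  simp only [walkWeight, smul_apply, smul_eq_mul, prod_mul_distrib, prod_const, card_range]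

theorem finite_range_walkWeight [Finite ι] (k : ℕ) :
    (Set.range fun f => S.walkWeight f k).Finite :=
  (Set.finite_range fun g : Fin (k + 1) → ι =>
      ∏ t : Fin k, S (g t.castSucc) (g t.succ)).subset <| by
    rintro _ ⟨f, rfl⟩
    exact ⟨fun t => f t, by
      simp [walkWeight, ← Fin.prod_univ_eq_prod_range (fun t => S (f t) (f (t + 1)))]⟩

end CommMonoid

section Real

variable {S : Matrix ι ι ℝ} {x : ι → ℝ} {c : ℝ}

theorem walkWeight_nonneg (hS : ∀ i j, 0 ≤ S i j) (f : ℕ → ι) (k : ℕ) :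
    0 ≤ S.walkWeight f k :=
  prod_nonneg fun _ _ => hS _ _

theorem walkWeight_mul_le_pow_mul (hS : ∀ i j, 0 ≤ S i j) (hc : 0 ≤ c)
    (hSx : ∀ i j, S i j * x j ≤ c * x i) (f : ℕ → ι) (k : ℕ) :
    S.walkWeight f k * x (f k) ≤ c ^ k * x (f 0) := by
  induction k with
  | zero => simp [walkWeight]
  | succ k ih =>
    calc S.walkWeight f (k + 1) * x (f (k + 1))
        = S.walkWeight f k * (S (f k) (f (k + 1)) * x (f (k + 1))) := by
          rw [walkWeight, prod_range_succ, mul_assoc]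
          rfl
      _ ≤ S.walkWeight f k * (c * x (f k)) :=
          mul_le_mul_of_nonneg_left (hSx _ _) (walkWeight_nonneg hS f k)
      _ = c * (S.walkWeight f k * x (f k)) := by ring
      _ ≤ c * (c ^ k * x (f 0)) := mul_le_mul_of_nonneg_left ih hc
      _ = c ^ (k + 1) * x (f 0) := by ring

theorem walkWeight_le_pow_of_mul_le (hS : ∀ i j, 0 ≤ S i j) (hc : 0 ≤ c)
    (hSx : ∀ i j, S i j * x j ≤ c * x i) {f : ℕ → ι} {k : ℕ} (hf : f k = f 0)
    (hx : 0 < x (f 0)) : S.walkWeight f k ≤ c ^ k :=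
  le_of_mul_le_mul_right (hf ▸ walkWeight_mul_le_pow_mul hS hc hSx f k) hx

theorem walkWeight_le_of_cycle_le_one (hS : ∀ i j, 0 ≤ S i j) {f : ℕ → ι} {p d : ℕ}
    (hf : f (p + d) = f p) (hcyc : S.walkWeight (fun t => f (p + t)) d ≤ 1) (m : ℕ) :
    S.walkWeight f (p + d + m) ≤
      S.walkWeight (fun t => f (if t ≤ p then t else t + d)) (p + m) := by
  have hhead : S.walkWeight (fun t => f (if t ≤ p then t else t + d)) p = S.walkWeight f p :=
    S.walkWeight_congr fun t ht => by simp [ht]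
  have htail :
      (fun t => f (if p + t ≤ p then p + t else p + t + d)) = fun t => f (p + d + t) := by
    funext t
    split_ifs with ht
    · obtain rfl : t = 0 := by omega
      simpa using hf.symm
    · congr 1
      omega
  rw [walkWeight_add, walkWeight_add, walkWeight_add, hhead, htail]
  exact mul_le_mul_of_nonneg_right
    (mul_le_of_le_one_right (walkWeight_nonneg hS _ _) hcyc) (walkWeight_nonneg hS _ _)

variable [Fintype ι]

theorem exists_short_walk_walkWeight_ge (hS : ∀ i j, 0 ≤ S i j)
    (hcyc : ∀ (f : ℕ → ι) (k : ℕ), 0 < k → k ≤ Fintype.card ι → f k = f 0 →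
      S.walkWeight f k ≤ 1)
    (f : ℕ → ι) (L : ℕ) :
    ∃ g k, g 0 = f 0 ∧ k < Fintype.card ι ∧ S.walkWeight f L ≤ S.walkWeight g k := by
  induction L using Nat.strong_induction_on generalizing f with
  | _ L ih =>
    by_cases hL : L < Fintype.card ι
    · exact ⟨f, L, rfl, hL, le_rfl⟩
    obtain ⟨p, q, hpq, hq, hfpq⟩ : ∃ p q, p < q ∧ q ≤ Fintype.card ι ∧ f p = f q := by
      obtain ⟨a, b, hab, h⟩ :=
        Fintype.exists_ne_map_eq_of_card_lt (fun t : Fin (Fintype.card ι + 1) => f t) (by simp)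
      rcases Fin.lt_or_lt_of_ne hab with hlt | hlt
      · exact ⟨a, b, hlt, Nat.lt_succ_iff.1 b.2, h⟩
      · exact ⟨b, a, hlt, Nat.lt_succ_iff.1 a.2, h.symm⟩
    obtain ⟨d, rfl⟩ : ∃ d, q = p + d := ⟨q - p, by omega⟩
    obtain ⟨m, rfl⟩ : ∃ m, L = p + d + m := ⟨L - (p + d), by omega⟩
    have hcyc' : S.walkWeight (fun t => f (p + t)) d ≤ 1 :=
      hcyc _ d (by omega) (by omega) (by simpa using hfpq.symm)
    obtain ⟨g, k, hg, hk, hle⟩ := ih (p + m) (by omega) _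
    exact ⟨g, k, by simpa using hg, hk,
      (walkWeight_le_of_cycle_le_one hS hfpq.symm hcyc' m).trans hle⟩

theorem exists_one_le_forall_mul_le (hS : ∀ i j, 0 ≤ S i j)
    (hcyc : ∀ (f : ℕ → ι) (k : ℕ), 0 < k → k ≤ Fintype.card ι → f k = f 0 →
      S.walkWeight f k ≤ 1) :
    ∃ x : ι → ℝ, (∀ i, 1 ≤ x i) ∧ ∀ i j, S i j * x j ≤ x i := by
  set W : ι → Set ℝ := fun i =>
    {w | ∃ f k, f 0 = i ∧ k < Fintype.card ι ∧ S.walkWeight f k = w}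
  have hfin : ∀ i, (W i).Finite := fun i =>
    ((Set.finite_Iio _).biUnion fun k _ => S.finite_range_walkWeight k).subset <| by
      rintro _ ⟨f, k, -, hk, rfl⟩
      exact Set.mem_biUnion hk ⟨f, rfl⟩
  have hone : ∀ i, 1 ∈ W i := fun i =>
    ⟨fun _ => i, 0, rfl, Fintype.card_pos_iff.2 ⟨i⟩, prod_range_zero _⟩
  refine ⟨fun i => sSup (W i), fun i => le_csSup (hfin i).bddAbove (hone i), fun i j => ?_⟩
  obtain ⟨f, k, rfl, -, hfk⟩ := Set.Nonempty.csSup_mem ⟨1, hone j⟩ (hfin j)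
  obtain ⟨g, l, hg, hl, hle⟩ :=
    exists_short_walk_walkWeight_ge hS hcyc (fun t => if t = 0 then i else f (t - 1)) (k + 1)
  calc S i (f 0) * sSup (W (f 0))
      = S.walkWeight (fun t => if t = 0 then i else f (t - 1)) (k + 1) := by
        rw [walkWeight_succ', ← hfk]
        simp
    _ ≤ S.walkWeight g l := hle
    _ ≤ sSup (W i) := le_csSup (hfin i).bddAbove ⟨g, l, by simpa using hg, hl, rfl⟩

end Real

end Matrix

section SpectralRadius

variable {n : ℕ} (B : Matrix (Fin n) (Fin n) ℝ)

def cycleMeans : Set ℝ :=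
  { r : ℝ | ∃ (k : ℕ) (hk : 0 < k), k ≤ n ∧ ∃ f : Fin k → Fin n,
    r = (∏ t : Fin k, B (f t) (f ⟨((t : ℕ) + 1) % k, Nat.mod_lt _ hk⟩)) ^ ((k : ℝ)⁻¹) }

theorem mtSpecRad_eq_sSup_cycleMeans : mtSpecRad B = sSup (cycleMeans B) := rfl

theorem prod_cycle_eq_walkWeight {k : ℕ} (hk : 0 < k) (g : Fin k → Fin n) :
    ∏ t : Fin k, B (g t) (g ⟨((t : ℕ) + 1) % k, Nat.mod_lt _ hk⟩) =
      B.walkWeight (fun t => g ⟨t % k, Nat.mod_lt _ hk⟩) k := by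
  rw [Matrix.walkWeight, ← Fin.prod_univ_eq_prod_range
    (fun t => B (g ⟨t % k, Nat.mod_lt _ hk⟩) (g ⟨(t + 1) % k, Nat.mod_lt _ hk⟩))]
  refine prod_congr rfl fun t _ => ?_
  simp only [Nat.mod_eq_of_lt t.2]

theorem mem_cycleMeans_iff {r : ℝ} :
    r ∈ cycleMeans B ↔ ∃ (f : ℕ → Fin n) (k : ℕ), 0 < k ∧ k ≤ n ∧ f k = f 0 ∧
      r = B.walkWeight f k ^ ((k : ℝ)⁻¹) := by
  constructor
  · rintro ⟨k, hk, hkn, g, rfl⟩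
    refine ⟨_, k, hk, hkn, ?_, by rw [prod_cycle_eq_walkWeight B hk]⟩
    exact congrArg g (Fin.ext (by simp))
  · rintro ⟨f, k, hk, hkn, hf, rfl⟩
    refine ⟨k, hk, hkn, fun t => f t, congrArg (· ^ ((k : ℝ)⁻¹)) ?_⟩
    refine Eq.trans ?_ (prod_cycle_eq_walkWeight B hk _).symm
    refine B.walkWeight_congr fun t ht => ?_
    rcases ht.lt_or_eq with ht | rfl
    · simp [Nat.mod_eq_of_lt ht]
    · simp [hf]

theorem finite_cycleMeans : (cycleMeans B).Finite :=
  ((Set.finite_Iic n).biUnion fun k _ =>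
    (B.finite_range_walkWeight k).image fun w => w ^ ((k : ℝ)⁻¹)).subset <| by
    intro r hr
    obtain ⟨f, k, -, hkn, -, rfl⟩ := (mem_cycleMeans_iff B).1 hr
    exact Set.mem_biUnion hkn ⟨_, ⟨f, rfl⟩, rfl⟩

variable {B}

theorem walkWeight_le_mtSpecRad_pow (hB : ∀ i j, 0 ≤ B i j) {f : ℕ → Fin n} {k : ℕ}
    (hk : 0 < k) (hkn : k ≤ n) (hf : f k = f 0) : B.walkWeight f k ≤ mtSpecRad B ^ k := by
  have hW := Matrix.walkWeight_nonneg hB f k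
  have hmean : B.walkWeight f k ^ ((k : ℝ)⁻¹) ≤ mtSpecRad B := by
    rw [mtSpecRad_eq_sSup_cycleMeans]
    exact le_csSup (finite_cycleMeans B).bddAbove
      ((mem_cycleMeans_iff B).2 ⟨f, k, hk, hkn, hf, rfl⟩)
  rwa [Real.rpow_inv_le_iff_of_pos hW ((Real.rpow_nonneg hW _).trans hmean) (by positivity),
    Real.rpow_natCast] at hmean

theorem diag_le_mtSpecRad (hB : ∀ i j, 0 ≤ B i j) (i : Fin n) : B i i ≤ mtSpecRad B := by
  simpa [Matrix.walkWeight] using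
    walkWeight_le_mtSpecRad_pow hB (f := fun _ => i) one_pos i.pos rfl

theorem mtSpecRad_le_of_walkWeight_le (hB : ∀ i j, 0 ≤ B i j) {c : ℝ} (hc : 0 ≤ c)
    (h : ∀ (f : ℕ → Fin n) (k : ℕ), 0 < k → k ≤ n → f k = f 0 →
      B.walkWeight f k ≤ c ^ k) :
    mtSpecRad B ≤ c := by
  rw [mtSpecRad_eq_sSup_cycleMeans]
  refine Real.sSup_le (fun r hr => ?_) hc
  obtain ⟨f, k, hk, hkn, hf, rfl⟩ := (mem_cycleMeans_iff B).1 hr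
  rw [Real.rpow_inv_le_iff_of_pos (Matrix.walkWeight_nonneg hB f k) hc (by positivity),
    Real.rpow_natCast]
  exact h f k hk hkn hf

theorem mtSpecRad_le_of_mul_le (hB : ∀ i j, 0 ≤ B i j) {x : Fin n → ℝ} (hx : ∀ i, 0 < x i)
    {c : ℝ} (hc : 0 ≤ c) (hBx : ∀ i j, B i j * x j ≤ c * x i) : mtSpecRad B ≤ c :=
  mtSpecRad_le_of_walkWeight_le hB hc fun _ _ _ _ hf =>
    Matrix.walkWeight_le_pow_of_mul_le hB hc hBx hf (hx _)

theorem exists_mul_le_mtSpecRad_mul (hB : ∀ i j, 0 ≤ B i j) (hμ : 0 < mtSpecRad B) :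
    ∃ x : Fin n → ℝ, (∀ i, 0 < x i) ∧ ∀ i j, B i j * x j ≤ mtSpecRad B * x i := by
  have hS : ∀ i j, 0 ≤ ((mtSpecRad B)⁻¹ • B) i j := fun i j =>
    mul_nonneg (inv_nonneg.2 hμ.le) (hB i j)
  obtain ⟨x, hx, hSx⟩ := Matrix.exists_one_le_forall_mul_le hS fun f k hk hkn hf => by
    rw [Matrix.walkWeight_smul, inv_pow, inv_mul_le_one₀ (pow_pos hμ k)]
    exact walkWeight_le_mtSpecRad_pow hB hk (by simpa using hkn) hf
  refine ⟨x, fun i => one_pos.trans_le (hx i), fun i j => ?_⟩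
  have := hSx i j
  rwa [Matrix.smul_apply, smul_eq_mul, mul_assoc, inv_mul_le_iff₀ hμ] at this

end SpectralRadius

section Distance

variable {n : ℕ} (A : Matrix (Fin n) (Fin n) ℝ) {x : Fin n → ℝ}

theorem mtRho_nonneg (hx : ∀ i, 0 < x i) : 0 ≤ mtRho A x :=
  le_max_of_le_right <| Real.sSup_nonneg <| by
    rintro _ ⟨i, j, hij, rfl⟩
    exact div_nonneg (hx i).le (mul_pos hij (hx j)).le

theorem max_mul_le_mtRho_mul (hx : ∀ i, 0 < x i) (i j : Fin n) :
    max (A i j) (A j i)⁻¹ * x j ≤ mtRho A x * x i := by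
  rw [max_mul_of_nonneg _ _ (hx j).le, max_le_iff, ← div_le_iff₀ (hx i),
    ← div_le_iff₀ (hx i)]
  refine ⟨le_max_of_le_left <|
    le_ciSup (f := fun p : Fin n × Fin n => A p.1 p.2 * x p.2 / x p.1)
      (Set.finite_range _).bddAbove (i, j), ?_⟩
  rcases lt_or_ge 0 (A j i) with hji | hji
  · have hbdd : BddAbove { r : ℝ | ∃ i j, 0 < A i j ∧ r = x i / (A i j * x j) } :=
      (Set.finite_range fun p : Fin n × Fin n => x p.1 / (A p.1 p.2 * x p.2)).bddAbove.mono <| by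
        rintro _ ⟨i, j, -, rfl⟩
        exact ⟨(i, j), rfl⟩
    refine le_max_of_le_right (le_csSup hbdd ⟨j, i, hji, ?_⟩)
    field_simp
  · exact (div_nonpos_of_nonpos_of_nonneg
      (mul_nonpos_of_nonpos_of_nonneg (inv_nonpos.2 hji) (hx j).le) (hx i).le).trans
      (mtRho_nonneg A hx)

theorem mtRho_le_of_max_mul_le (hx : ∀ i, 0 < x i) {c : ℝ} (hc : 0 ≤ c)
    (h : ∀ i j, max (A i j) (A j i)⁻¹ * x j ≤ c * x i) : mtRho A x ≤ c := by
  refine max_le (Real.iSup_le (fun p => ?_) hc) (Real.sSup_le ?_ hc)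
  · rw [div_le_iff₀ (hx p.1)]
    exact (mul_le_mul_of_nonneg_right (le_max_left _ _) (hx _).le).trans (h p.1 p.2)
  · rintro _ ⟨i, j, hij, rfl⟩
    have hji := (mul_le_mul_of_nonneg_right (le_max_right _ _) (hx i).le).trans (h j i)
    rw [inv_mul_le_iff₀ hij] at hji
    rw [div_le_iff₀ (mul_pos hij (hx j))]
    linarith

end Distance

-- `(A j i)⁻¹` stands for `(A j i)⁻`, as `(0 : ℝ)⁻¹ = 0`.
theorem mt_rho_min_general {n : ℕ} (hn : 1 ≤ n) (A : Matrix (Fin n) (Fin n) ℝ)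
    (hAA : ∀ i j, 0 < A i j ∨ 0 < A j i)
    (B : Matrix (Fin n) (Fin n) ℝ) (hB : ∀ i j, B i j = max (A i j) (A j i)⁻¹)
    (μ : ℝ) (hμ : μ = mtSpecRad B) :
    IsLeast { y : ℝ | ∃ x : Fin n → ℝ, (∀ i, 0 < x i) ∧ y = mtRho A x } μ := by
  subst hμ
  have hBpos : ∀ i j, 0 < B i j := fun i j => by
    rw [hB]
    exact (hAA i j).elim lt_max_of_lt_left fun h => lt_max_of_lt_right (inv_pos.2 h)
  have hBnonneg : ∀ i j, 0 ≤ B i j := fun i j => (hBpos i j).le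
  have hlower : ∀ x : Fin n → ℝ, (∀ i, 0 < x i) → mtSpecRad B ≤ mtRho A x := fun x hx =>
    mtSpecRad_le_of_mul_le hBnonneg hx (mtRho_nonneg A hx) fun i j => by
      rw [hB]
      exact max_mul_le_mtRho_mul A hx i j
  have hμ : 0 < mtSpecRad B :=
    (hBpos ⟨0, hn⟩ ⟨0, hn⟩).trans_le (diag_le_mtSpecRad hBnonneg _)
  obtain ⟨x, hx, hBx⟩ := exists_mul_le_mtSpecRad_mul hBnonneg hμ
  have hupper : mtRho A x ≤ mtSpecRad B := mtRho_le_of_max_mul_le A hx hμ.le fun i j => by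
    rw [← hB]
    exact hBx i j
  refine ⟨⟨x, hx, (hlower x hx).antisymm hupper⟩, ?_⟩
  rintro _ ⟨y, hy, rfl⟩
  exact hlower y hy

/-- For `B_{ij} = max(A_{ij}, (A_{ji})⁻)`, the minimum over positive
vectors `x` of the Chebyshev-like distance `ρ(A, x)` equals the max-times spectral
radius `μ = λ(B)`, and it is attained. (In `ℝ`, `(0 : ℝ)⁻¹ = 0`, so `t⁻¹` realizes
`t⁻` for `t ≥ 0`.) -/
theorem mt_rho_min {n : ℕ} (hn : 1 ≤ n) (A : Matrix (Fin n) (Fin n) ℝ)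
    (hA : ∀ i j, 0 ≤ A i j) (hAA : ∀ i j, 0 < A i j ∨ 0 < A j i)
    (B : Matrix (Fin n) (Fin n) ℝ) (hB : ∀ i j, B i j = max (A i j) (A j i)⁻¹)
    (μ : ℝ) (hμ : μ = mtSpecRad B) :
    IsLeast { y : ℝ | ∃ x : Fin n → ℝ, (∀ i, 0 < x i) ∧ y = mtRho A x } μ :=
  mt_rho_min_general hn A hAA B hB μ hμ

end
end
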